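/- arXiv:1605.04751 — 2 statements merged into one kernel-verified Lean document; each statement's English description precedes it below -/
import Mathlib

section
/- Let α = [n+1] with the critical-simplex vector field on Δ(α), and let γ be any (n−1)-simplex of Δ(α) lying on the boundary of α (i.e., its label is an ordered partition of an n-element subset of [n+1] into n singletons). Then there is a unique n-dimensional V-path in Δ(α) starting at the unpaired simplex α' = ({n+1},{n},…,{1}) and exiting Δ(α) through γ. -/
/-- An ordered partition of a finite set `S`: a list of pairwise disjoint nonempty
blocks whose union is `S`. -/
def IsOrderedPartition (S : Finset ℕ) (l : List (Finset ℕ)) : Prop :=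
  (∀ I ∈ l, I.Nonempty) ∧ l.Pairwise Disjoint ∧ l.foldr (· ∪ ·) ∅ = S

/-- The non-critical pairing (lower, higher) for a pair `(α, β)` with `β = α ∪ {v}`,
`A` the vertex set of `α`: rules 1/2 (append/delete the final singleton `{v}`) and
rules 3/4 (split `v` out leftward / merge the singleton `{v}` with the following block). -/
def NCPair (v : ℕ) (A : Finset ℕ) (p q : List (Finset ℕ)) : Prop :=
  (IsOrderedPartition A p ∧ q = p ++ [{v}]) ∨
  (∃ l I r, v ∉ I ∧ I.Nonempty ∧ p = l ++ (insert v I :: r) ∧ q = l ++ ({v} :: I :: r))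

/-- `p` is the label of a facet (codimension-one face) of the simplex with label `q`:
either merge two adjacent blocks, or delete the last block. -/
def LabelFacet (p q : List (Finset ℕ)) : Prop :=
  (∃ l I J r, q = l ++ (I :: J :: r) ∧ p = l ++ ((I ∪ J) :: r)) ∨ (∃ I, q = p ++ [I])

/-- A V-path `β₀, α₁, β₁, α₂, …, β_m, α_{m+1}` of a discrete vector field:
`upper i` is `β_i`, `lower i` is `α_{i+1}`; each `α_{i+1}` is a facet of `β_i`,
each `(α_i, β_i)` (for `1 ≤ i ≤ m`) is a pair of the field, and `αᵢ ≠ αᵢ₊₁`. -/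
structure VPath {σ : Type} (Facet : σ → σ → Prop) (Pair : σ → σ → Prop) where
  len : ℕ
  upper : ℕ → σ
  lower : ℕ → σ
  face_step : ∀ i ≤ len, Facet (lower i) (upper i)
  pair_step : ∀ i < len, Pair (lower i) (upper (i+1))
  lower_ne : ∀ i < len, lower i ≠ lower (i+1)

/-- The underlying sequence of simplexes of a V-path. -/
def pathList {σ : Type} {F P : σ → σ → Prop} (Γ : VPath F P) : List σ :=
  (List.range (Γ.len+1)).flatMap (fun i => [Γ.upper i, Γ.lower i])

/-- The length of the greatest common suffix of two lists of blocks. -/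
def gcs (p q : List (Finset ℕ)) : ℕ :=
  ((p.reverse.zip q.reverse).takeWhile (fun x => x.1 == x.2)).length

/-- The list `[n+1, n, …, 1]`. -/
def ordRev (n : ℕ) : List ℕ := (List.range (n+1)).map (fun i => n+1-i)

/-- The label `({n+1}, {n}, …, {1})` of the distinguished simplex `α'`. -/
def alphaPrime (n : ℕ) : List (Finset ℕ) := (ordRev n).map (fun a => ({a} : Finset ℕ))

/-- The critical pairing (lower, higher) relative to a chosen vertex order `o`
(so that `λ(α') = o.map singleton`): with `i` the length of the greatest common
suffix with `λ(α')` and `x` the entry occupying the `(i+1)`-st block from the end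
of `λ(α')`, pair by splitting `x` out leftward / merging the singleton `{x}` with
the following block. -/
def CritPair (o : List ℕ) (p q : List (Finset ℕ)) : Prop :=
  ∃ x l I r, (o.reverse)[gcs q (o.map (fun a => ({a} : Finset ℕ)))]? = some x ∧
    x ∉ I ∧ I.Nonempty ∧ p = l ++ (insert x I :: r) ∧ q = l ++ ({x} :: I :: r)

namespace UP


def sg (a : ℕ) : Finset ℕ := {a}
def sm (l : List ℕ) : List (Finset ℕ) := l.map sg

lemma sg_inj : Function.Injective sg := fun a b h => Finset.singleton_injective h

lemma sm_append (l₁ l₂ : List ℕ) : sm (l₁ ++ l₂) = sm l₁ ++ sm l₂ := List.map_append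
lemma sm_cons (a l) : sm (a :: l) = sg a :: sm l := rfl
lemma sm_inj : Function.Injective sm := fun a b h => List.map_injective_iff.2 sg_inj h

def desc : ℕ → List ℕ
  | 0 => []
  | j+1 => (j+1) :: desc j

lemma desc_length (j : ℕ) : (desc j).length = j := by
  induction j with
  | zero => rfl
  | succ j ih => simp [desc, ih]

lemma mem_desc {a j : ℕ} : a ∈ desc j ↔ 1 ≤ a ∧ a ≤ j := by
  induction j with
  | zero => simp [desc]; omega
  | succ j ih => simp [desc, ih]; omega

lemma ordRev_eq_desc (n : ℕ) : ordRev n = desc (n+1) := by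
  induction n with
  | zero => rfl
  | succ n ih =>
    have h1 : ordRev (n+1) = (n+2) :: ordRev n := by
      unfold ordRev
      rw [List.range_succ_eq_map]
      simp [List.map_map, Function.comp]
    rw [h1, ih]; rfl

lemma alphaPrime_eq (n : ℕ) : alphaPrime n = sm (desc (n+1)) := by
  rw [alphaPrime, ordRev_eq_desc]; rfl

/-- `gcf`: length of the greatest common prefix. -/
def gcf (p q : List (Finset ℕ)) : ℕ := ((p.zip q).takeWhile (fun x => x.1 == x.2)).length

lemma gcs_eq_gcf (p q) : gcs p q = gcf p.reverse q.reverse := rfl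

lemma gcf_cons_self (a : Finset ℕ) (A B) : gcf (a::A) (a::B) = gcf A B + 1 := by
  simp [gcf, List.zip_cons_cons, List.takeWhile_cons]

lemma gcf_cons_ne {a b : Finset ℕ} (A B) (h : a ≠ b) : gcf (a::A) (b::B) = 0 := by
  simp [gcf, List.zip_cons_cons, List.takeWhile_cons, h]

lemma gcf_prefix (C A B : List (Finset ℕ)) : gcf (C++A) (C++B) = C.length + gcf A B := by
  induction C with
  | nil => simp
  | cons c C ih =>
    rw [List.cons_append, List.cons_append, gcf_cons_self, ih]
    simp; omega

lemma gcf_nil_left (B) : gcf [] B = 0 := by simp [gcf]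

lemma gcf_self (l : List (Finset ℕ)) : gcf l l = l.length := by
  induction l with
  | nil => simp [gcf]
  | cons a l ih => rw [gcf_cons_self, ih]; simp

lemma gcs_append_same (A B C : List (Finset ℕ)) :
    gcs (A++C) (B++C) = gcf A.reverse B.reverse + C.length := by
  rw [gcs_eq_gcf, List.reverse_append, List.reverse_append, gcf_prefix]
  simp; omega

lemma gcs_self (l : List (Finset ℕ)) : gcs l l = l.length := by
  rw [gcs_eq_gcf, gcf_self]; simp


end UP

section NEXT
open UP

lemma desc_split {j m : ℕ} (h : j < m) : ∃ D : List ℕ, desc m = (D ++ [j+1]) ++ desc j := by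
  induction m with
  | zero => omega
  | succ m ih =>
    rcases Nat.lt_or_ge j m with hm | hm
    · obtain ⟨D, hD⟩ := ih hm
      exact ⟨(m+1) :: D, by rw [desc, hD]; rfl⟩
    · have : j = m := by omega
      subst this
      exact ⟨[], rfl⟩

lemma get?_desc_reverse {j m : ℕ} (h : j < m) : (desc m).reverse[j]? = some (j+1) := by
  induction m with
  | zero => omega
  | succ m ih =>
    rw [desc, List.reverse_cons]
    rcases Nat.lt_or_ge j m with hm | hm
    · rw [List.getElem?_append_left (by simpa [desc_length] using hm)]
      exact ih hm
    · have : j = m := by omega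
      subst this
      rw [List.getElem?_append_right (by simp [desc_length])]
      simp [desc_length]

lemma get?_ordRev_reverse {j n : ℕ} (h : j ≤ n) : (ordRev n).reverse[j]? = some (j+1) := by
  rw [ordRev_eq_desc]; exact get?_desc_reverse (by omega)

/-- key gcs computation: exact descending suffix. -/
lemma gcs_key {n j : ℕ} (hj : j ≤ n) (U : List ℕ) (a : ℕ) (ha : a ≠ j+1) :
    gcs (sm ((U ++ [a]) ++ desc j)) (alphaPrime n) = j := by
  obtain ⟨D, hD⟩ := desc_split (show j < n+1 by omega)
  rw [alphaPrime_eq, hD, sm_append (U++[a]) (desc j), sm_append (D++[j+1]) (desc j), gcs_append_same]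
  have h0 : gcf (sm (U ++ [a])).reverse (sm (D ++ [j+1])).reverse = 0 := by
    rw [sm_append, sm_append, List.reverse_append, List.reverse_append]
    simp only [sm_cons, sm]
    apply gcf_cons_ne
    exact fun hc => ha (sg_inj hc)
  rw [h0]; simp [sm, desc_length]

lemma not_critPair_alphaPrime {n : ℕ} {p : List (Finset ℕ)} :
    ¬ CritPair (ordRev n) p (alphaPrime n) := by
  rintro ⟨x, l, I, r, hx, -⟩
  have hg : gcs (alphaPrime n) ((ordRev n).map (fun a => ({a} : Finset ℕ))) = n+1 := by
    have : (ordRev n).map (fun a => ({a} : Finset ℕ)) = alphaPrime n := rfl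
    rw [this, gcs_self, alphaPrime, List.length_map, ordRev, List.length_map,
      List.length_range]
  rw [hg] at hx
  have : (ordRev n).reverse.length ≤ n+1 := by
    simp [ordRev]
  rw [List.getElem?_eq_none this] at hx
  exact Option.some_ne_none x hx.symm

end NEXT

section PART
open UP

def PermW (n : ℕ) (w : List ℕ) : Prop :=
  w.Nodup ∧ ∀ a, a ∈ w ↔ a ∈ Finset.Icc 1 (n+1)

lemma PermW.len {n : ℕ} {w : List ℕ} (h : PermW n w) : w.length = n+1 := by
  have h1 : w.toFinset = Finset.Icc 1 (n+1) := Finset.ext (fun a => by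
    rw [List.mem_toFinset]; exact h.2 a)
  have h2 := List.toFinset_card_of_nodup h.1
  rw [h1] at h2
  simp [Nat.card_Icc] at h2
  omega

lemma foldr_union_sm (l : List ℕ) : (sm l).foldr (· ∪ ·) ∅ = l.toFinset := by
  induction l with
  | nil => simp [sm]
  | cons a l ih =>
    rw [sm_cons, List.foldr_cons, ih, List.toFinset_cons, Finset.insert_eq]; rfl

lemma foldr_union_append (A B : List (Finset ℕ)) :
    (A ++ B).foldr (· ∪ ·) ∅ = A.foldr (· ∪ ·) ∅ ∪ B.foldr (· ∪ ·) ∅ := by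
  induction A with
  | nil => simp
  | cons a A ih => simp [ih, Finset.union_assoc]

lemma pairwise_disjoint_sm {l : List ℕ} (h : l.Nodup) : (sm l).Pairwise Disjoint := by
  rw [sm, List.pairwise_map]
  exact h.imp (fun hab => Finset.disjoint_singleton.2 hab)

lemma permPart {n : ℕ} {w : List ℕ} (h : PermW n w) :
    IsOrderedPartition (Finset.Icc 1 (n+1)) (sm w) := by
  refine ⟨?_, pairwise_disjoint_sm h.1, ?_⟩
  · intro I hI
    obtain ⟨a, -, rfl⟩ := List.mem_map.1 hI
    exact ⟨a, Finset.mem_singleton_self a⟩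
  · rw [foldr_union_sm]
    ext a
    rw [List.mem_toFinset]
    exact h.2 a

lemma mergePart {n : ℕ} {u₁ u₂ : List ℕ} {x b : ℕ}
    (h : PermW n (u₁ ++ x :: b :: u₂)) :
    IsOrderedPartition (Finset.Icc 1 (n+1)) (sm u₁ ++ (insert x {b}) :: sm u₂) := by
  have hnd := h.1
  rw [List.nodup_append] at hnd
  obtain ⟨h1, h2, h3⟩ := hnd
  simp only [List.nodup_cons, List.mem_cons] at h2
  refine ⟨?_, ?_, ?_⟩
  · intro I hI
    rcases List.mem_append.1 hI with hI | hI
    · obtain ⟨a, -, rfl⟩ := List.mem_map.1 hI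
      exact ⟨a, Finset.mem_singleton_self a⟩
    · rcases List.mem_cons.1 hI with rfl | hI
      · exact Finset.insert_nonempty _ _
      · obtain ⟨a, -, rfl⟩ := List.mem_map.1 hI
        exact ⟨a, Finset.mem_singleton_self a⟩
  · refine List.pairwise_append.2 ⟨pairwise_disjoint_sm h1, ?_, ?_⟩
    · refine List.pairwise_cons.2 ⟨?_, pairwise_disjoint_sm h2.2.2⟩
      intro J hJ
      obtain ⟨c, hc, rfl⟩ := List.mem_map.1 hJ
      rw [Finset.disjoint_left]
      intro a ha
      rcases Finset.mem_insert.1 ha with rfl | ha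
      · simp [sg]; intro hh; exact h2.1 (Or.inr (hh ▸ hc))
      · rw [Finset.mem_singleton] at ha; subst ha
        simp [sg]; intro hh; exact h2.2.1 (hh ▸ hc)
    · intro I hI J hJ
      obtain ⟨a, ha, rfl⟩ := List.mem_map.1 hI
      have hna : a ∉ x :: b :: u₂ := fun hm => h3 a ha a hm rfl
      simp only [List.mem_cons] at hna
      rcases List.mem_cons.1 hJ with rfl | hJ
      · rw [Finset.disjoint_left]
        intro c hc
        simp only [sg, Finset.mem_singleton] at hc
        subst hc
        simp only [Finset.mem_insert, Finset.mem_singleton]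
        tauto
      · obtain ⟨c, hc, rfl⟩ := List.mem_map.1 hJ
        exact Finset.disjoint_singleton.2 (fun hh => hna (Or.inr (Or.inr (hh ▸ hc))))
  · have key : (sm u₁ ++ (insert x {b}) :: sm u₂).foldr (· ∪ ·) ∅ =
        u₁.toFinset ∪ (insert x (insert b u₂.toFinset)) := by
      rw [foldr_union_append, foldr_union_sm, List.foldr_cons, foldr_union_sm]
      congr 1
      ext a
      simp [Finset.mem_insert]
    rw [key]
    ext a
    rw [← h.2 a]
    simp [List.mem_append, List.mem_cons]
    tauto

/-- The potential `Σ i * wᵢ`. -/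
def phi : List ℕ → ℕ
  | [] => 0
  | _ :: l => l.sum + phi l

lemma phi_append (A B : List ℕ) : phi (A ++ B) = phi A + A.length * B.sum + phi B := by
  induction A with
  | nil => simp [phi]
  | cons a A ih =>
    show phi ((a :: A) ++ B) = _
    rw [List.cons_append]
    show (A ++ B).sum + phi (A ++ B) = _
    rw [List.sum_append, ih]
    show _ = (A.sum + phi A) + (A.length + 1) * B.sum + phi B
    ring

lemma phi_swap (u₁ t : List ℕ) (b x : ℕ) :
    phi (u₁ ++ b :: x :: t) + b = phi (u₁ ++ x :: b :: t) + x := by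
  rw [phi_append, phi_append]
  show _ + u₁.length * (b + (x + t.sum)) + ((x :: t).sum + ((t).sum + phi t)) + b = _
  show _ = phi u₁ + u₁.length * (x + (b + t.sum)) + ((b :: t).sum + ((t).sum + phi t)) + x
  simp [List.sum_cons]
  ring

/-- one forward step of the canonical V-path, with its intermediate lower simplex. -/
def StepRel (n : ℕ) (v : List ℕ) (p : List (Finset ℕ)) (w : List ℕ) : Prop :=
  ∃ u₁ b u₂ j, j ≤ n ∧ j+1 < b ∧ (j+1) ∉ u₂ ∧
    v = u₁ ++ b :: (j+1) :: (u₂ ++ desc j) ∧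
    w = u₁ ++ (j+1) :: b :: (u₂ ++ desc j) ∧
    p = sm u₁ ++ (insert (j+1) {b}) :: sm (u₂ ++ desc j)

lemma StepRel.phi_lt {n v p w} (h : StepRel n v p w) : phi v < phi w := by
  obtain ⟨u₁, b, u₂, j, hj, hb, -, rfl, rfl, -⟩ := h
  have := phi_swap u₁ (u₂ ++ desc j) b (j+1)
  omega

lemma StepRel.permv {n v p w} (h : StepRel n v p w) (hw : PermW n w) : PermW n v := by
  obtain ⟨u₁, b, u₂, j, -, -, -, rfl, rfl, -⟩ := h
  have hp : (u₁ ++ b :: (j+1) :: (u₂ ++ desc j)).Perm (u₁ ++ (j+1) :: b :: (u₂ ++ desc j)) :=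
    List.Perm.append_left u₁ (List.Perm.swap _ _ _)
  exact ⟨hp.nodup_iff.2 hw.1, fun a => by rw [hp.mem_iff]; exact hw.2 a⟩

lemma StepRel.pair {n v p w} (h : StepRel n v p w) (hw : PermW n w) :
    CritPair (ordRev n) p (sm w) := by
  obtain ⟨u₁, b, u₂, j, hj, hb, hju, rfl, rfl, rfl⟩ := h
  refine ⟨j+1, sm u₁, {b}, sm (u₂ ++ desc j), ?_,
    by simp only [Finset.mem_singleton]; omega, ⟨b, Finset.mem_singleton_self b⟩, rfl, ?_⟩
  · have hgcs : gcs (sm (u₁ ++ (j+1) :: b :: (u₂ ++ desc j)))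
        ((ordRev n).map (fun a => ({a} : Finset ℕ))) = j := by
      have hL : b :: u₂ ≠ [] := List.cons_ne_nil _ _
      have ha : (b :: u₂).getLast hL ≠ j + 1 := by
        intro hc
        have := List.getLast_mem hL
        rw [hc] at this
        rcases List.mem_cons.1 this with h' | h'
        · omega
        · exact hju h'
      have hdec : u₁ ++ (j+1) :: b :: (u₂ ++ desc j) =
          ((u₁ ++ (j+1) :: (b :: u₂).dropLast) ++ [(b :: u₂).getLast hL]) ++ desc j := by
        conv_lhs => rw [show (j+1) :: b :: (u₂ ++ desc j) = ((j+1) :: (b :: u₂)) ++ desc j by simp]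
        rw [← List.append_assoc]
        congr 1
        rw [List.append_assoc]
        congr 1
        rw [List.cons_append]
        congr 1
        exact (List.dropLast_append_getLast hL).symm
      rw [hdec]
      exact gcs_key hj _ _ ha
    show (ordRev n).reverse[gcs _ _]? = _
    rw [hgcs]
    exact get?_ordRev_reverse hj
  · simp [sm, sg]

lemma StepRel.face {n v p w} (h : StepRel n v p w) : LabelFacet p (sm v) := by
  obtain ⟨u₁, b, u₂, j, -, hb, -, rfl, -, rfl⟩ := h
  left
  refine ⟨sm u₁, sg b, sg (j+1), sm (u₂ ++ desc j), ?_, ?_⟩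
  · rw [sm_append, sm_cons, sm_cons]
  · congr 1
    congr 1
    ext a
    simp [sg, Finset.mem_insert, Finset.mem_union]
    tauto

lemma StepRel.lowpart {n v p w} (h : StepRel n v p w) (hw : PermW n w) :
    IsOrderedPartition (Finset.Icc 1 (n+1)) p := by
  obtain ⟨u₁, b, u₂, j, -, -, -, -, rfl, rfl⟩ := h
  exact mergePart hw

end PART

section REACH
open UP

lemma exists_split : ∀ (l : List ℕ) (x : ℕ) (hne : l ≠ []), x ∈ l →
    x ≠ l.getLast hne → ∃ l₁ b l₂, l = l₁ ++ x :: b :: l₂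
  | [], _, hne, _, _ => absurd rfl hne
  | [a], x, _, hx, hl => by
    simp at hx
    simp [List.getLast, hx] at hl
  | a :: c :: t, x, _, hx, hl => by
    rcases List.mem_cons.1 hx with rfl | hx'
    · exact ⟨[], c, t, rfl⟩
    · have hl' : x ≠ (c::t).getLast (List.cons_ne_nil _ _) := by
        rwa [List.getLast_cons (List.cons_ne_nil _ _)] at hl
      obtain ⟨l₁, b, l₂, h⟩ := exists_split (c::t) x (List.cons_ne_nil _ _) hx' hl'
      exact ⟨a :: l₁, b, l₂, by rw [h]; rfl⟩

lemma decomp {n : ℕ} {w : List ℕ} (hw : PermW n w) (hne : w ≠ desc (n+1)) :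
    ∃ v p, StepRel n v p w ∧ PermW n v := by
  classical
  set P : ℕ → Prop := fun j => desc j <:+ w with hP
  have hP0 : P 0 := List.nil_suffix
  set j := Nat.findGreatest P (n+1) with hjdef
  have hPj : P j := Nat.findGreatest_spec (Nat.zero_le _) hP0
  have hlenw : w.length = n+1 := hw.len
  have hjle : j ≤ n+1 := Nat.findGreatest_le _
  have hjne : j ≠ n+1 := by
    intro hc
    apply hne
    have h2 := hPj
    rw [hc] at h2
    exact (List.IsSuffix.eq_of_length h2 (by rw [desc_length, hlenw])).symm
  have hjn : j ≤ n := by omega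
  obtain ⟨u, hu⟩ := hPj
  have hune : u ≠ [] := by
    intro hc
    rw [hc, List.nil_append] at hu
    apply hjne
    have h2 := congrArg List.length hu
    rw [desc_length, hlenw] at h2
    omega
  have hxw : (j+1) ∈ w := (hw.2 _).2 (Finset.mem_Icc.2 ⟨by omega, by omega⟩)
  have hxd : (j+1) ∉ desc j := fun hc => by
    have := mem_desc.1 hc; omega
  have hxu : (j+1) ∈ u := by
    rw [← hu] at hxw
    rcases List.mem_append.1 hxw with h | h
    · exact h
    · exact absurd h hxd
  have hxl : (j+1) ≠ u.getLast hune := by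
    intro hc
    refine Nat.findGreatest_is_greatest (show j < j+1 by omega) (by omega) ?_
    refine ⟨u.dropLast, ?_⟩
    show u.dropLast ++ desc (j+1) = w
    rw [← hu, show desc (j+1) = [j+1] ++ desc j from rfl, ← List.append_assoc]
    congr 1
    rw [hc]
    exact List.dropLast_append_getLast hune
  obtain ⟨u₁, b, u₂, husplit⟩ := exists_split u (j+1) hune hxu hxl
  have hw2 : w = u₁ ++ (j+1) :: b :: (u₂ ++ desc j) := by
    rw [← hu, husplit]; simp
  have hnd := hw.1
  rw [hw2] at hnd
  have hmid : ((j+1) :: b :: (u₂ ++ desc j)).Nodup :=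
    (List.sublist_append_right u₁ _).nodup hnd
  have h1 := List.nodup_cons.1 hmid
  have h2 := List.nodup_cons.1 h1.2
  have hbnej : ¬ (j+1 = b) := fun hc => h1.1 (hc ▸ List.mem_cons_self)
  have hjnu₂ : (j+1) ∉ u₂ := fun hc => h1.1 (List.mem_cons_of_mem _ (List.mem_append_left _ hc))
  have hbd : b ∉ desc j := fun hc => h2.1 (List.mem_append_right _ hc)
  have hbmem : b ∈ w := by rw [hw2]; simp
  have hb1 : 1 ≤ b ∧ b ≤ n+1 := Finset.mem_Icc.1 ((hw.2 b).1 hbmem)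
  have hbgt : j + 1 < b := by
    have hble : ¬ (1 ≤ b ∧ b ≤ j) := fun hc => hbd (mem_desc.2 hc)
    omega
  have hstep : StepRel n (u₁ ++ b :: (j+1) :: (u₂ ++ desc j))
      (sm u₁ ++ (insert (j+1) {b}) :: sm (u₂ ++ desc j)) w :=
    ⟨u₁, b, u₂, j, hjn, hbgt, hjnu₂, rfl, hw2, rfl⟩
  exact ⟨_, _, hstep, hstep.permv hw⟩

lemma reach_aux {n : ℕ} : ∀ (N : ℕ) (w : List ℕ), phi w ≤ N → PermW n w →
    ∃ (m : ℕ) (U : ℕ → List ℕ) (Lo : ℕ → List (Finset ℕ)),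
      U 0 = desc (n+1) ∧ U m = w ∧ (∀ i ≤ m, PermW n (U i)) ∧
      ∀ i < m, StepRel n (U i) (Lo i) (U (i+1)) := by
  intro N
  induction N with
  | zero =>
    intro w hph hw
    by_cases he : w = desc (n+1)
    · exact ⟨0, fun _ => w, fun _ => [], by rw [he], rfl, fun i _ => hw,
        fun i h => absurd h (Nat.not_lt_zero i)⟩
    · obtain ⟨v, p, hs, hv⟩ := decomp hw he
      exact absurd hs.phi_lt (by omega)
  | succ N ih =>
    intro w hph hw
    by_cases he : w = desc (n+1)
    · exact ⟨0, fun _ => w, fun _ => [], by rw [he], rfl, fun i _ => hw,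
        fun i h => absurd h (Nat.not_lt_zero i)⟩
    · obtain ⟨v, p, hs, hv⟩ := decomp hw he
      obtain ⟨m, U, Lo, hU0, hUm, hUP, hUS⟩ := ih v (by have := hs.phi_lt; omega) hv
      refine ⟨m+1, fun i => if i ≤ m then U i else w, fun i => if i < m then Lo i else p,
        by simp [hU0], by simp, ?_, ?_⟩
      · intro i hi
        by_cases h : i ≤ m
        · simpa [h] using hUP i h
        · simpa [h] using hw
      · intro i hi
        by_cases h : i < m
        · simpa [h, Nat.le_of_lt h, Nat.succ_le_of_lt h] using hUS i h
        · have hieq : i = m := by omega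
          subst hieq
          simpa [hUm] using hs

lemma reach {n : ℕ} {w : List ℕ} (hw : PermW n w) :
    ∃ (m : ℕ) (U : ℕ → List ℕ) (Lo : ℕ → List (Finset ℕ)),
      U 0 = desc (n+1) ∧ U m = w ∧ (∀ i ≤ m, PermW n (U i)) ∧
      ∀ i < m, StepRel n (U i) (Lo i) (U (i+1)) :=
  reach_aux (phi w) w le_rfl hw

end REACH

section UNIQ
open UP

lemma eq_split {α : Type*} : ∀ {l l' r r' : List α} {a : α},
    l ++ a :: r = l' ++ a :: r' → a ∉ l → a ∉ l' → l = l' ∧ r = r'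
  | [], [], r, r', a, h, _, _ => ⟨rfl, by simpa using h⟩
  | [], b :: l', r, r', a, h, _, hl' => by
    simp only [List.nil_append, List.cons_append, List.cons.injEq] at h
    exact absurd (h.1 ▸ List.mem_cons_self) hl'
  | c :: l, [], r, r', a, h, hl, _ => by
    simp only [List.cons_append, List.nil_append, List.cons.injEq] at h
    exact absurd (h.1 ▸ List.mem_cons_self) (h.1 ▸ hl)
  | c :: l, d :: l', r, r', a, h, hl, hl' => by
    simp only [List.cons_append, List.cons.injEq] at h
    obtain ⟨rfl, h2⟩ := h
    have := eq_split h2 (fun hc => hl (List.mem_cons_of_mem _ hc))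
      (fun hc => hl' (List.mem_cons_of_mem _ hc))
    exact ⟨by rw [this.1], this.2⟩

lemma unique_split : ∀ {A A' B B' : List (Finset ℕ)} {D D' : Finset ℕ},
    A ++ D :: B = A' ++ D' :: B' → (∀ c ∈ A, c.card = 1) → (∀ c ∈ B, c.card = 1) →
    2 ≤ D.card → 2 ≤ D'.card → A = A' ∧ D = D' ∧ B = B'
  | [], [], B, B', D, D', h, _, _, _, _ => by
    simp only [List.nil_append, List.cons.injEq] at h
    exact ⟨rfl, h.1, h.2⟩
  | [], c' :: A'', B, B', D, D', h, _, hB, hD, hD' => by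
    simp only [List.nil_append, List.cons_append, List.cons.injEq] at h
    have : D' ∈ B := h.2 ▸ List.mem_append_right _ (List.mem_cons_self)
    have := hB _ this
    omega
  | c :: A₀, [], B, B', D, D', h, hA, _, hD, hD' => by
    simp only [List.cons_append, List.nil_append, List.cons.injEq] at h
    have := hA c (List.mem_cons_self)
    rw [h.1] at this
    omega
  | c :: A₀, c' :: A'', B, B', D, D', h, hA, hB, hD, hD' => by
    simp only [List.cons_append, List.cons.injEq] at h
    obtain ⟨rfl, h2⟩ := h
    have := unique_split h2 (fun d hd => hA d (List.mem_cons_of_mem _ hd)) hB hD hD'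
    exact ⟨by rw [this.1], this.2.1, this.2.2⟩

lemma critPair_fun {n : ℕ} {w : List ℕ} (hnd : w.Nodup) {p p' : List (Finset ℕ)}
    (h : CritPair (ordRev n) p (sm w)) (h' : CritPair (ordRev n) p' (sm w)) : p = p' := by
  obtain ⟨x, l, I, r, hx, hxI, hI, hp, hq⟩ := h
  obtain ⟨x', l', I', r', hx', hxI', hI', hp', hq'⟩ := h'
  have hxx : x' = x := by
    rw [hx] at hx'
    exact (Option.some.inj hx').symm
  rw [hxx] at hxI' hp' hq'
  clear hxx hx'
  have ndq : (sm w).Nodup := hnd.map sg_inj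
  have hq2 : sm w = l ++ sg x :: I :: r := hq
  have hq2' : sm w = l' ++ sg x :: I' :: r' := hq'
  have hxn : sg x ∉ l := by
    intro hc
    rw [hq2, List.nodup_append] at ndq
    exact ndq.2.2 _ hc _ List.mem_cons_self rfl
  have hxn' : sg x ∉ l' := by
    intro hc
    rw [hq2', List.nodup_append] at ndq
    exact ndq.2.2 _ hc _ List.mem_cons_self rfl
  have := eq_split (hq2.symm.trans hq2') hxn hxn'
  obtain ⟨rfl, h2⟩ := this
  obtain ⟨h3, h4⟩ := List.cons_eq_cons.1 h2
  subst h3; subst h4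
  rw [hp, hp']

lemma sm_structure {w : List ℕ} {l r : List (Finset ℕ)} {I : Finset ℕ} {x : ℕ}
    (h : sm w = l ++ ({x} : Finset ℕ) :: I :: r) :
    ∃ u₁ b u₂, w = u₁ ++ x :: b :: u₂ ∧ l = sm u₁ ∧ I = sg b ∧ r = sm u₂ := by
  rw [sm, List.map_eq_append_iff] at h
  obtain ⟨u₁, t, rfl, hl, ht⟩ := h
  rw [List.map_eq_cons_iff] at ht
  obtain ⟨c, t', rfl, hc, ht'⟩ := ht
  rw [List.map_eq_cons_iff] at ht'
  obtain ⟨b, u₂, rfl, hb, hu₂⟩ := ht'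
  have hcx : c = x := sg_inj (show sg c = sg x from hc)
  subst hcx
  exact ⟨u₁, b, u₂, rfl, hl.symm, hb.symm, hu₂.symm⟩

lemma mem_subset_foldr {I : Finset ℕ} {l : List (Finset ℕ)} (h : I ∈ l) :
    I ⊆ l.foldr (· ∪ ·) ∅ := by
  induction l with
  | nil => simp at h
  | cons a l ih =>
    rcases List.mem_cons.1 h with rfl | h
    · exact Finset.subset_union_left
    · exact (ih h).trans Finset.subset_union_right

lemma disjoint_foldr {I : Finset ℕ} {l : List (Finset ℕ)} (h : ∀ J ∈ l, Disjoint I J) :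
    Disjoint I (l.foldr (· ∪ ·) ∅) := by
  induction l with
  | nil => simp
  | cons a l ih =>
    rw [List.foldr_cons, Finset.disjoint_union_right]
    exact ⟨h a (List.mem_cons_self), ih (fun J hJ => h J (List.mem_cons_of_mem _ hJ))⟩

lemma foldr_merge_eq (l r : List (Finset ℕ)) (I J : Finset ℕ) :
    (l ++ I :: J :: r).foldr (· ∪ ·) ∅ = (l ++ (I ∪ J) :: r).foldr (· ∪ ·) ∅ := by
  rw [foldr_union_append, foldr_union_append, List.foldr_cons, List.foldr_cons,
    List.foldr_cons, Finset.union_assoc]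

lemma facet_forced {n : ℕ} {u₁ u₂ : List ℕ} {x b : ℕ} (hxb : x ≠ b) {u : List (Finset ℕ)}
    (hu : IsOrderedPartition (Finset.Icc 1 (n+1)) u)
    (hp : IsOrderedPartition (Finset.Icc 1 (n+1)) (sm u₁ ++ (insert x {b}) :: sm u₂))
    (hf : LabelFacet (sm u₁ ++ (insert x {b}) :: sm u₂) u) :
    u = sm u₁ ++ sg x :: sg b :: sm u₂ ∨ u = sm u₁ ++ sg b :: sg x :: sm u₂ := by
  rcases hf with ⟨l', I', J', r', huu, hpp⟩ | ⟨I, hI⟩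
  · -- merge case
    have hI'ne : I'.Nonempty := hu.1 I' (huu ▸ List.mem_append_right _ (List.mem_cons_self))
    have hJ'ne : J'.Nonempty := hu.1 J' (huu ▸ List.mem_append_right _
      (List.mem_cons_of_mem _ (List.mem_cons_self)))
    have hdisj : Disjoint I' J' := by
      have hpw := hu.2.1
      rw [huu] at hpw
      have := (List.pairwise_append.1 hpw).2.1
      exact (List.pairwise_cons.1 this).1 J' (List.mem_cons_self)
    have hcard : 2 ≤ (I' ∪ J').card := by
      rw [Finset.card_union_of_disjoint hdisj]
      have := hI'ne.card_pos
      have := hJ'ne.card_pos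
      omega
    have hDcard : 2 ≤ (insert x ({b} : Finset ℕ)).card := by
      rw [Finset.card_insert_of_notMem (by simp [hxb]), Finset.card_singleton]
    have hsplit := unique_split hpp
      (fun c hc => by obtain ⟨a, -, rfl⟩ := List.mem_map.1 hc; exact Finset.card_singleton a)
      (fun c hc => by obtain ⟨a, -, rfl⟩ := List.mem_map.1 hc; exact Finset.card_singleton a)
      hDcard hcard
    obtain ⟨hl, hD, hr⟩ := hsplit
    -- I' ∪ J' = {x, b}; determine I', J'
    have hunion : I' ∪ J' = insert x ({b} : Finset ℕ) := hD.symm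
    have hxmem : x ∈ I' ∪ J' := hunion ▸ Finset.mem_insert_self _ _
    have hbmem : b ∈ I' ∪ J' := hunion ▸ Finset.mem_insert.2 (Or.inr (Finset.mem_singleton_self b))
    have hsub : ∀ c, c ∈ I' ∪ J' → c = x ∨ c = b := by
      intro c hc
      rw [hunion, Finset.mem_insert, Finset.mem_singleton] at hc
      exact hc
    have hkey : (I' = {x} ∧ J' = {b}) ∨ (I' = {b} ∧ J' = {x}) := by
      rcases Finset.mem_union.1 hxmem with hxI | hxJ
      · left
        have hbJ : b ∈ J' := by
          rcases Finset.mem_union.1 hbmem with hbI | hbJ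
          · exfalso
            obtain ⟨c, hc⟩ := hJ'ne
            rcases hsub c (Finset.mem_union_right _ hc) with rfl | rfl
            · exact Finset.disjoint_left.1 hdisj hxI hc
            · exact Finset.disjoint_left.1 hdisj hbI hc
          · exact hbJ
        constructor
        · ext c
          rw [Finset.mem_singleton]
          constructor
          · intro hc
            rcases hsub c (Finset.mem_union_left _ hc) with rfl | rfl
            · rfl
            · exact absurd hc (Finset.disjoint_left.1 hdisj.symm hbJ)
          · rintro rfl; exact hxI
        · ext c
          rw [Finset.mem_singleton]
          constructor
          · intro hc
            rcases hsub c (Finset.mem_union_right _ hc) with rfl | rfl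
            · exact absurd hc (Finset.disjoint_left.1 hdisj hxI)
            · rfl
          · rintro rfl; exact hbJ
      · right
        have hbI : b ∈ I' := by
          rcases Finset.mem_union.1 hbmem with hbI | hbJ
          · exact hbI
          · exfalso
            obtain ⟨c, hc⟩ := hI'ne
            rcases hsub c (Finset.mem_union_left _ hc) with rfl | rfl
            · exact Finset.disjoint_left.1 hdisj hc hxJ
            · exact Finset.disjoint_left.1 hdisj hc hbJ
        constructor
        · ext c
          rw [Finset.mem_singleton]
          constructor
          · intro hc
            rcases hsub c (Finset.mem_union_left _ hc) with rfl | rfl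
            · exact absurd hxJ (Finset.disjoint_left.1 hdisj hc)
            · rfl
          · rintro rfl; exact hbI
        · ext c
          rw [Finset.mem_singleton]
          constructor
          · intro hc
            rcases hsub c (Finset.mem_union_right _ hc) with rfl | rfl
            · rfl
            · exact absurd hc (Finset.disjoint_left.1 hdisj hbI)
          · rintro rfl; exact hxJ
    rcases hkey with ⟨rfl, rfl⟩ | ⟨rfl, rfl⟩
    · left; rw [huu, ← hl, ← hr]; rfl
    · right; rw [huu, ← hl, ← hr]; rfl
  · -- delete case: impossible
    exfalso
    have hfp := hp.2.2
    have hIne : I.Nonempty := hu.1 I (hI ▸ List.mem_append_right _ (List.mem_cons_self))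
    have hIdisj : Disjoint I ((sm u₁ ++ (insert x {b}) :: sm u₂).foldr (· ∪ ·) ∅) := by
      apply disjoint_foldr
      intro J hJ
      have hpw := hu.2.1
      rw [hI] at hpw
      exact ((List.pairwise_append.1 hpw).2.2 J hJ I (List.mem_cons_self)).symm
    rw [hfp] at hIdisj
    have hImem : I ∈ u := hI ▸ List.mem_append_right _ (List.mem_cons_self)
    have hIsub : I ⊆ Finset.Icc 1 (n+1) := hu.2.2 ▸ mem_subset_foldr hImem
    obtain ⟨c, hc⟩ := hIne
    exact Finset.disjoint_left.1 hIdisj hc (hIsub hc)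

end UNIQ

section MAIN
open UP

lemma sing_word : ∀ {γ : List (Finset ℕ)}, (∀ I ∈ γ, I.card = 1) → ∃ g, γ = sm g
  | [], _ => ⟨[], rfl⟩
  | a :: γ, h => by
    obtain ⟨c, hc⟩ := Finset.card_eq_one.1 (h a (List.mem_cons_self))
    obtain ⟨g, hgg⟩ := sing_word (fun I hI => h I (List.mem_cons_of_mem _ hI))
    exact ⟨c :: g, by rw [hgg, hc]; rfl⟩

lemma forced_end {n : ℕ} {γ u : List (Finset ℕ)} {S : Finset ℕ} {v₀ : ℕ}
    (hγS : γ.foldr (· ∪ ·) ∅ = S) (hcard : S.card = n)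
    (hv : Finset.Icc 1 (n+1) \ S = {v₀})
    (hu : IsOrderedPartition (Finset.Icc 1 (n+1)) u)
    (hf : LabelFacet γ u) : u = γ ++ [({v₀} : Finset ℕ)] := by
  rcases hf with ⟨l, I, J, r, huu, hgg⟩ | ⟨I, hI⟩
  · exfalso
    have hfold : u.foldr (· ∪ ·) ∅ = Finset.Icc 1 (n+1) := hu.2.2
    rw [huu, foldr_merge_eq, ← hgg, hγS] at hfold
    have := congrArg Finset.card hfold
    rw [hcard, Nat.card_Icc] at this
    omega
  · have hIvk : I = ({v₀} : Finset ℕ) := by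
      have hfold : u.foldr (· ∪ ·) ∅ = Finset.Icc 1 (n+1) := hu.2.2
      rw [hI, foldr_union_append, hγS] at hfold
      have hdisj : Disjoint I S := by
        rw [← hγS]
        apply (disjoint_foldr ?_)
        intro J hJ
        have hpw := hu.2.1
        rw [hI] at hpw
        exact ((List.pairwise_append.1 hpw).2.2 J hJ I (List.mem_cons_self)).symm
      rw [← hv]
      ext c
      rw [Finset.mem_sdiff]
      constructor
      · intro hc
        refine ⟨?_, fun hcS => Finset.disjoint_left.1 hdisj hc hcS⟩
        rw [← hfold]
        simp only [Finset.mem_union, List.foldr_cons, List.foldr_nil]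
        right; left; exact hc
      · rintro ⟨hcI, hcS⟩
        rw [← hfold] at hcI
        simp only [Finset.mem_union, List.foldr_cons, List.foldr_nil,
          Finset.notMem_empty, or_false] at hcI
        tauto
    rw [hI, hIvk]

lemma stepRel_lower_ne {n : ℕ} {v w w' : List ℕ} {p p' : List (Finset ℕ)}
    (h1 : StepRel n v p w) (h2 : StepRel n w p' w') : p ≠ p' := by
  intro he
  obtain ⟨u₁, b, u₂, j, hj, hb, hju, hv1, hw1, hp1⟩ := h1
  obtain ⟨u₁', b', u₂', j', hj', hb', hju', hv2, hw2, hp2⟩ := h2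
  rw [hp1, hp2] at he
  have hcd : 2 ≤ (insert (j+1) ({b} : Finset ℕ)).card := by
    rw [Finset.card_insert_of_notMem (by simp; omega), Finset.card_singleton]
  have hcd' : 2 ≤ (insert (j'+1) ({b'} : Finset ℕ)).card := by
    rw [Finset.card_insert_of_notMem (by simp; omega), Finset.card_singleton]
  have hus := unique_split he
    (fun c hc => by obtain ⟨a, -, rfl⟩ := List.mem_map.1 hc; exact Finset.card_singleton a)
    (fun c hc => by obtain ⟨a, -, rfl⟩ := List.mem_map.1 hc; exact Finset.card_singleton a)
    hcd hcd'
  obtain ⟨he1, -, he3⟩ := hus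
  have hu₁ : u₁ = u₁' := sm_inj he1
  have htail : u₂ ++ desc j = u₂' ++ desc j' := sm_inj he3
  -- w has two decompositions
  have hww : u₁ ++ (j+1) :: b :: (u₂ ++ desc j) = u₁ ++ b' :: (j'+1) :: (u₂' ++ desc j') := by
    rw [← hw1, hv2, hu₁]
  have h5 := List.append_cancel_left hww
  obtain ⟨hjb, h6⟩ := List.cons_eq_cons.1 h5
  obtain ⟨hbj, -⟩ := List.cons_eq_cons.1 h6
  -- so w' = v
  have hwv : w' = v := by
    rw [hw2, hv1, ← hu₁, ← hjb, ← hbj, htail]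
  have p1 := StepRel.phi_lt ⟨u₁, b, u₂, j, hj, hb, hju, hv1, hw1, hp1⟩
  have p2 := StepRel.phi_lt ⟨u₁', b', u₂', j', hj', hb', hju', hv2, hw2, hp2⟩
  rw [hwv] at p2
  omega

end MAIN


open UP in
/-- For every `(n-1)`-simplex `γ` of `Δ(α)` on the boundary of the critical simplex
`α = [n+1]` (its label is a partition of an `n`-element subset of `[n+1]` into `n`
singletons), there is a unique `n`-dimensional V-path of the critical vector field
starting at the unpaired simplex `α'` and exiting `Δ(α)` through `γ`. -/
theorem unique_path_from_alphaPrime (n : ℕ) (γ : List (Finset ℕ)) (S : Finset ℕ)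
    (hS : S ⊆ Finset.Icc 1 (n+1)) (hcard : S.card = n)
    (hγ : IsOrderedPartition S γ) (hlen : γ.length = n)
    (hsing : ∀ I ∈ γ, I.card = 1) :
    ∃! lst : List (List (Finset ℕ)),
      ∃ P : VPath LabelFacet (CritPair (ordRev n)),
        P.upper 0 = alphaPrime n ∧
        (∀ i ≤ P.len, IsOrderedPartition (Finset.Icc 1 (n+1)) (P.upper i)) ∧
        (∀ i < P.len, IsOrderedPartition (Finset.Icc 1 (n+1)) (P.lower i)) ∧
        P.lower P.len = γ ∧ pathList P = lst := by
  classical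
  obtain ⟨g, rfl⟩ := sing_word hsing
  have hgnd : g.Nodup := by
    have hpw := hγ.2.1
    rw [sm, List.pairwise_map] at hpw
    exact hpw.imp (fun hab => Finset.disjoint_singleton.1 hab)
  have hgS : g.toFinset = S := by rw [← foldr_union_sm]; exact hγ.2.2
  have hcs : (Finset.Icc 1 (n+1) \ S).card = 1 := by
    rw [Finset.card_sdiff_of_subset hS, Nat.card_Icc, hcard]; omega
  obtain ⟨v₀, hv⟩ := Finset.card_eq_one.1 hcs
  have hv₀ : v₀ ∈ Finset.Icc 1 (n+1) \ S := hv ▸ Finset.mem_singleton_self v₀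
  have hv₀Icc : v₀ ∈ Finset.Icc 1 (n+1) := (Finset.mem_sdiff.1 hv₀).1
  have hv₀S : v₀ ∉ S := (Finset.mem_sdiff.1 hv₀).2
  have hperm : PermW n (g ++ [v₀]) := by
    constructor
    · rw [List.nodup_append]
      refine ⟨hgnd, List.nodup_singleton _, ?_⟩
      intro a ha b hha hab
      rw [List.mem_singleton] at hha
      subst hha; subst hab
      exact hv₀S (hgS ▸ List.mem_toFinset.2 ha)
    · intro a
      rw [List.mem_append, List.mem_singleton]
      constructor
      · rintro (h | rfl)
        · exact hS (hgS ▸ List.mem_toFinset.2 h)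
        · exact hv₀Icc
      · intro ha
        by_cases haS : a ∈ S
        · exact Or.inl (List.mem_toFinset.1 (hgS.symm ▸ haS))
        · right
          have : a ∈ Finset.Icc 1 (n+1) \ S := Finset.mem_sdiff.2 ⟨ha, haS⟩
          rw [hv] at this
          exact Finset.mem_singleton.1 this
  obtain ⟨m, U, Lo, hU0, hUm, hUP, hUS⟩ := reach hperm
  have hface : ∀ i ≤ m, LabelFacet (if i < m then Lo i else sm g) (sm (U i)) := by
    intro i hi
    by_cases h : i < m
    · rw [if_pos h]
      exact (hUS i h).face
    · have hieq : i = m := by omega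
      subst hieq
      rw [if_neg h]
      right
      exact ⟨sg v₀, by rw [hUm]; simp [sm]⟩
  have hpair : ∀ i < m, CritPair (ordRev n) (if i < m then Lo i else sm g) (sm (U (i+1))) := by
    intro i hi
    rw [if_pos hi]
    exact (hUS i hi).pair (hUP (i+1) hi)
  have hne : ∀ i < m, (if i < m then Lo i else sm g) ≠ (if i+1 < m then Lo (i+1) else sm g) := by
    intro i hi
    rw [if_pos hi]
    by_cases h : i + 1 < m
    · rw [if_pos h]
      exact stepRel_lower_ne (hUS i hi) (hUS (i+1) h)
    · rw [if_neg h]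
      intro he
      have h1 : (Lo i).foldr (· ∪ ·) ∅ = Finset.Icc 1 (n+1) :=
        ((hUS i hi).lowpart (hUP (i+1) hi)).2.2
      rw [he, hγ.2.2] at h1
      have := congrArg Finset.card h1
      rw [hcard, Nat.card_Icc] at this
      omega
  set P : VPath LabelFacet (CritPair (ordRev n)) :=
    ⟨m, fun i => sm (U i), fun i => if i < m then Lo i else sm g, hface, hpair, hne⟩ with hPdef
  have hPlow : P.lower P.len = sm g := by
    show (if m < m then _ else sm g) = sm g
    rw [if_neg (lt_irrefl m)]
  refine ⟨pathList P, ⟨P, ?_, ?_, ?_, hPlow, rfl⟩, ?_⟩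
  · show sm (U 0) = alphaPrime n
    rw [hU0, alphaPrime_eq]
  · intro i hi
    exact permPart (hUP i hi)
  · intro i hi
    show IsOrderedPartition _ (if i < m then Lo i else sm g)
    rw [if_pos hi]
    exact (hUS i hi).lowpart (hUP (i+1) hi)
  -- uniqueness
  rintro lst ⟨Q, hQ0, hQup, hQlo, hQlast, rfl⟩
  have key : ∀ k, k ≤ Q.len → k ≤ m →
      Q.upper (Q.len - k) = sm (U (m - k)) ∧ (0 < k → Q.lower (Q.len - k) = Lo (m - k)) := by
    intro k
    induction k with
    | zero =>
      intro h1 h2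
      refine ⟨?_, by omega⟩
      have hforced : Q.upper Q.len = sm g ++ [({v₀} : Finset ℕ)] :=
        forced_end hγ.2.2 hcard hv (hQup Q.len le_rfl)
          (hQlast ▸ Q.face_step Q.len le_rfl)
      rw [Nat.sub_zero, Nat.sub_zero, hforced, hUm, sm_append]
      rfl
    | succ k ih =>
      intro h1 h2
      obtain ⟨ihu, -⟩ := ih (by omega) (by omega)
      have e1 : Q.len - k = (Q.len - (k+1)) + 1 := by omega
      have e2 : m - k = (m - (k+1)) + 1 := by omega
      rw [e1, e2] at ihu
      set i := Q.len - (k+1) with hidef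
      set i' := m - (k+1) with hi'def
      have hi'm : i' < m := by omega
      have him : i < Q.len := by omega
      have hstep := hUS i' hi'm
      have hPw : PermW n (U (i'+1)) := hUP (i'+1) hi'm
      have hcp : CritPair (ordRev n) (Lo i') (sm (U (i'+1))) := hstep.pair hPw
      have hlowp : IsOrderedPartition (Finset.Icc 1 (n+1)) (Lo i') := hstep.lowpart hPw
      have hqp : CritPair (ordRev n) (Q.lower i) (sm (U (i'+1))) := by
        have hps := Q.pair_step i him
        rwa [ihu] at hps
      have hlow : Q.lower i = Lo i' := critPair_fun hPw.1 hqp hcp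
      obtain ⟨u₁, b, u₂, j, hj, hb, hju, hv1, hw1, hp1⟩ := hstep
      rw [hp1] at hlowp
      have hf : LabelFacet (sm u₁ ++ (insert (j+1) {b}) :: sm (u₂ ++ desc j)) (Q.upper i) := by
        have hfs := Q.face_step i (le_of_lt him)
        rwa [hlow, hp1] at hfs
      have hup := facet_forced (show j+1 ≠ b by omega) (hQup i (le_of_lt him)) hlowp hf
      have hqeq : sm u₁ ++ sg (j+1) :: sg b :: sm (u₂ ++ desc j) = sm (U (i'+1)) := by
        rw [hw1]; simp [sm]
      have hveq : sm u₁ ++ sg b :: sg (j+1) :: sm (u₂ ++ desc j) = sm (U i') := by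
        rw [hv1]; simp [sm]
      rcases hup with hup | hup
      · exfalso
        rw [hqeq] at hup
        rcases Nat.eq_zero_or_pos i with hi0 | hi0
        · rw [hi0, hQ0] at hup
          rw [← hup] at hcp
          exact not_critPair_alphaPrime hcp
        · have hpair2 := Q.pair_step (i-1) (by omega)
          have ei : i - 1 + 1 = i := by omega
          rw [ei, hup] at hpair2
          have hll := critPair_fun hPw.1 hpair2 hcp
          have hnn := Q.lower_ne (i-1) (by omega)
          rw [ei] at hnn
          exact hnn (hll.trans hlow.symm)
      · rw [hveq] at hup
        exact ⟨hup, fun _ => hlow⟩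
  have hlen_eq : Q.len = m := by
    by_contra hne'
    rcases Nat.lt_or_ge Q.len m with hlt | hge
    · have hk := (key Q.len le_rfl (le_of_lt hlt)).1
      rw [Nat.sub_self, hQ0] at hk
      have hst := hUS (m - Q.len - 1) (by omega)
      have e : m - Q.len - 1 + 1 = m - Q.len := by omega
      rw [e] at hst
      have hcp2 := hst.pair (hUP _ (by omega))
      rw [← hk] at hcp2
      exact not_critPair_alphaPrime hcp2
    · have hmlt : m < Q.len := by omega
      have hk := (key m (le_of_lt hmlt) le_rfl).1
      rw [Nat.sub_self, hU0, ← alphaPrime_eq] at hk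
      have hp2 := Q.pair_step (Q.len - m - 1) (by omega)
      have e : Q.len - m - 1 + 1 = Q.len - m := by omega
      rw [e, hk] at hp2
      exact not_critPair_alphaPrime hp2
  have hup_all : ∀ i ≤ m, Q.upper i = sm (U i) := by
    intro i hi
    have hk := (key (m - i) (by omega) (by omega)).1
    rwa [show Q.len - (m - i) = i by omega, show m - (m - i) = i by omega] at hk
  have hlo_all : ∀ i < m, Q.lower i = Lo i := by
    intro i hi
    have hk := (key (m - i) (by omega) (by omega)).2 (by omega)
    rwa [show Q.len - (m - i) = i by omega, show m - (m - i) = i by omega] at hk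
  show pathList Q = pathList P
  rw [pathList, pathList, hlen_eq]
  apply List.flatMap_congr
  intro i hi
  rw [List.mem_range] at hi
  have hi' : i ≤ m := by omega
  have h1 : Q.upper i = P.upper i := hup_all i hi'
  have h2 : Q.lower i = P.lower i := by
    by_cases h : i < m
    · show _ = if i < m then Lo i else sm g
      rw [if_pos h]
      exact hlo_all i h
    · have hieq : i = m := by omega
      rw [hieq]
      show _ = if m < m then Lo m else sm g
      rw [if_neg (lt_irrefl m), ← hlen_eq]
      exact hQlast
  rw [h1, h2]
end

section
/- If F is a discrete Morse function on a simplicial complex L, then the vector field Δ(F) on the barycentric subdivision Δ(L) has no closed V-paths, i.e., Δ(F) is a discrete Morse function. -/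
/-- An abstract simplicial complex on vertex set `ℕ`. -/
structure AbsSC where
  faces : Set (Finset ℕ)
  nonempty_of_mem : ∀ s ∈ faces, s.Nonempty
  down_closed : ∀ s ∈ faces, ∀ t : Finset ℕ, t ⊆ s → t.Nonempty → t ∈ faces

/-- Simplexes of the barycentric subdivision `Δ(L)`, encoded as nonempty strictly
increasing chains of simplexes of `L`. -/
def IsBarySimplex (L : AbsSC) (c : List (Finset ℕ)) : Prop :=
  c ≠ [] ∧ c.Chain' (· ⊂ ·) ∧ ∀ t ∈ c, t ∈ L.faces

/-- The carrier of a simplex of `Δ(L)`: the maximal simplex of its chain, i.e. the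
simplex of `L` in whose interior it lies. -/
def carrier (c : List (Finset ℕ)) : Finset ℕ := c.getLastD ∅

/-- The label of a chain `s₁ ⊂ s₂ ⊂ ⋯ ⊂ s_{k+1}`: the ordered partition
`(s₁, s₂ \\ s₁, …, s_{k+1} \\ s_k)`. -/
def label : List (Finset ℕ) → List (Finset ℕ)
  | [] => []
  | s :: rest => s :: List.zipWith (fun a b => b \ a) (s :: rest) rest

/-- Facet relation between simplexes of `Δ(L)`: subchain of codimension one. -/
def FacetChain (c d : List (Finset ℕ)) : Prop := c.Sublist d ∧ c.length + 1 = d.length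

/-- Facet relation between simplexes of `L`. -/
def FacetFS (s t : Finset ℕ) : Prop := s ⊆ t ∧ t.card = s.card + 1

/-- `F` is a discrete vector field on `L`: each pair consists of a simplex and a
cofacet and each simplex participates in at most one pair. -/
def IsDVF (L : AbsSC) (F : Finset ℕ → Finset ℕ → Prop) : Prop :=
  (∀ s t, F s t → s ∈ L.faces ∧ t ∈ L.faces ∧ s ⊆ t ∧ t.card = s.card + 1) ∧
  (∀ s t t', F s t → F s t' → t = t') ∧
  (∀ s s' t, F s t → F s' t → s = s') ∧
  (∀ s t u, F s t → ¬ F t u)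

/-- A simplex is critical for `F` if it participates in no pair. -/
def CriticalF (F : Finset ℕ → Finset ℕ → Prop) (s : Finset ℕ) : Prop :=
  (∀ t, ¬ F s t) ∧ (∀ t, ¬ F t s)

/-- `Ord` assigns to each critical simplex of `F` an ordering of its vertices
(the blocks, read left to right, of the chosen label of `α'`). -/
def OrdValid (L : AbsSC) (F : Finset ℕ → Finset ℕ → Prop) (Ord : Finset ℕ → List ℕ) : Prop :=
  ∀ s ∈ L.faces, CriticalF F s → (Ord s).Nodup ∧ (Ord s).toFinset = s

/-- The discrete vector field `Δ(F)` on the barycentric subdivision: inside each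
critical simplex use the greatest-common-suffix pairing relative to the chosen
ordering; inside each non-critical pair `(s, insert v s) ∈ F` use the four rules
with distinguished entry `v`. -/
def DeltaPair (L : AbsSC) (F : Finset ℕ → Finset ℕ → Prop) (Ord : Finset ℕ → List ℕ)
    (c d : List (Finset ℕ)) : Prop :=
  IsBarySimplex L c ∧ IsBarySimplex L d ∧
  ((CriticalF F (carrier c) ∧ carrier d = carrier c ∧
      CritPair (Ord (carrier c)) (label c) (label d)) ∨
   (∃ s v, F s (insert v s) ∧ v ∉ s ∧
     ((carrier c = s ∧ carrier d = insert v s ∧ label d = label c ++ [{v}]) ∨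
      (carrier c = insert v s ∧ carrier d = insert v s ∧
       ∃ l I r, v ∉ I ∧ I.Nonempty ∧ label c = l ++ (insert v I :: r) ∧
         label d = l ++ ({v} :: I :: r)))))

/-- Critical simplexes of `Δ(F)`. -/
def CritDelta (L : AbsSC) (F : Finset ℕ → Finset ℕ → Prop) (Ord : Finset ℕ → List ℕ)
    (c : List (Finset ℕ)) : Prop :=
  IsBarySimplex L c ∧ ∀ d, ¬ DeltaPair L F Ord c d ∧ ¬ DeltaPair L F Ord d c


section DeltaMorseAux

/-! ### Common-prefix machinery for `gcs` -/

private def Agr (l m : List (Finset ℕ)) (k : ℕ) : Prop :=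
  ∃ a, l[k]? = some a ∧ m[k]? = some a

private def cpl (l m : List (Finset ℕ)) : ℕ :=
  ((l.zip m).takeWhile (fun x => x.1 == x.2)).length

private lemma gcs_eq_cpl (p q : List (Finset ℕ)) : gcs p q = cpl p.reverse q.reverse := rfl

private lemma cpl_cons (a b : Finset ℕ) (l m : List (Finset ℕ)) :
    cpl (a::l) (b::m) = if a = b then cpl l m + 1 else 0 := by
  by_cases h : a = b
  · subst h; simp [cpl, List.zip_cons_cons, List.takeWhile_cons]
  · simp [cpl, List.zip_cons_cons, List.takeWhile_cons, h]

private lemma cpl_iff (l m : List (Finset ℕ)) (n : ℕ) :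
    cpl l m = n ↔ (∀ k < n, Agr l m k) ∧ ¬ Agr l m n := by
  induction l generalizing m n with
  | nil =>
    have h0 : cpl [] m = 0 := rfl
    have hA : ∀ k, ¬ Agr [] m k := by intro k ⟨a, ha, _⟩; simp at ha
    rw [h0]
    constructor
    · rintro rfl; exact ⟨by omega, hA 0⟩
    · rintro ⟨h1, h2⟩
      by_contra hn
      exact (hA 0) (h1 0 (by omega))
  | cons a l ih =>
    cases m with
    | nil =>
      have h0 : cpl (a::l) [] = 0 := rfl
      have hA : ∀ k, ¬ Agr (a::l) [] k := by intro k ⟨x, _, hx⟩; simp at hx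
      rw [h0]
      constructor
      · rintro rfl; exact ⟨by omega, hA 0⟩
      · rintro ⟨h1, h2⟩
        by_contra hn
        exact (hA 0) (h1 0 (by omega))
    | cons b m =>
      rw [cpl_cons]
      have hz : Agr (a::l) (b::m) 0 ↔ a = b := by
        constructor
        · rintro ⟨x, hx, hy⟩
          simp only [List.getElem?_cons_zero, Option.some.injEq] at hx hy
          rw [hx, hy]
        · rintro rfl; exact ⟨a, rfl, rfl⟩
      have hs : ∀ k, Agr (a::l) (b::m) (k+1) ↔ Agr l m k := by
        intro k; constructor
        · rintro ⟨x, hx, hy⟩; exact ⟨x, hx, hy⟩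
        · rintro ⟨x, hx, hy⟩; exact ⟨x, hx, hy⟩
      by_cases hab : a = b
      · rw [if_pos hab]
        cases n with
        | zero =>
          simp only [Nat.succ_ne_zero, false_iff, not_and, not_not]
          intro _
          exact hz.2 hab
        | succ n =>
          rw [show (cpl l m + 1 = n + 1) ↔ cpl l m = n by omega, ih m n]
          constructor
          · rintro ⟨h1, h2⟩
            refine ⟨?_, fun h => h2 ((hs n).1 h)⟩
            intro k hk
            cases k with
            | zero => exact hz.2 hab
            | succ k => exact (hs k).2 (h1 k (by omega))
          · rintro ⟨h1, h2⟩
            exact ⟨fun k hk => (hs k).1 (h1 (k+1) (by omega)), fun h => h2 ((hs n).2 h)⟩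
      · rw [if_neg hab]
        constructor
        · rintro rfl
          exact ⟨by omega, fun h => hab (hz.1 h)⟩
        · rintro ⟨h1, h2⟩
          by_contra hn
          exact hab (hz.1 (h1 0 (by omega)))

private lemma cpl_agree {l m : List (Finset ℕ)} {n : ℕ} (h : cpl l m = n) :
    ∀ k < n, Agr l m k := ((cpl_iff l m n).1 h).1

private lemma cpl_not_agree {l m : List (Finset ℕ)} {n : ℕ} (h : cpl l m = n) :
    ¬ Agr l m n := ((cpl_iff l m n).1 h).2

private lemma cpl_congr {l₁ l₂ m : List (Finset ℕ)} {n : ℕ}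
    (h : ∀ k ≤ n, l₁[k]? = l₂[k]?) (h1 : cpl l₁ m = n) : cpl l₂ m = n := by
  rw [cpl_iff] at h1 ⊢
  constructor
  · intro k hk
    obtain ⟨a, ha, hb⟩ := h1.1 k hk
    exact ⟨a, (h k (by omega)) ▸ ha, hb⟩
  · rintro ⟨a, ha, hb⟩
    exact h1.2 ⟨a, (h n le_rfl) ▸ ha, hb⟩

/-! ### `label` via relative labels -/

private def lf (p : Finset ℕ) : List (Finset ℕ) → List (Finset ℕ)
  | [] => []
  | a :: t => (a \ p) :: lf a t

private lemma zip_diff (a : Finset ℕ) (t : List (Finset ℕ)) :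
    List.zipWith (fun x b => b \ x) (a::t) t = lf a t := by
  induction t generalizing a with
  | nil => rfl
  | cons b t ih => simp [lf, ih b]

private lemma label_eq_lf (c : List (Finset ℕ)) : label c = lf ∅ c := by
  cases c with
  | nil => rfl
  | cons s rest => simp [label, lf, zip_diff]

private lemma lf_length (p : Finset ℕ) (c : List (Finset ℕ)) : (lf p c).length = c.length := by
  induction c generalizing p with
  | nil => rfl
  | cons a t ih => simp [lf, ih]

private lemma label_length (c : List (Finset ℕ)) : (label c).length = c.length := by
  rw [label_eq_lf]; exact lf_length _ _

private lemma getLastD_cons' (a p : Finset ℕ) (u : List (Finset ℕ)) :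
    (a::u).getLastD p = u.getLastD a := by
  cases u <;> simp [List.getLastD]

private lemma lf_append (p : Finset ℕ) (u v : List (Finset ℕ)) :
    lf p (u ++ v) = lf p u ++ lf (u.getLastD p) v := by
  induction u generalizing p with
  | nil => rfl
  | cons a u ih => rw [List.cons_append, lf, ih a, getLastD_cons']; rfl

private def unl (p : Finset ℕ) : List (Finset ℕ) → List (Finset ℕ)
  | [] => []
  | B :: t => (p ∪ B) :: unl (p ∪ B) t

private lemma unl_lf (p : Finset ℕ) (c : List (Finset ℕ))
    (h : List.Chain' (· ⊆ ·) (p :: c)) : unl p (lf p c) = c := by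
  induction c generalizing p with
  | nil => rfl
  | cons a t ih =>
    have h1 : p ⊆ a := (List.isChain_cons_cons.1 h).1
    have h2 : List.Chain' (· ⊆ ·) (a :: t) := (List.isChain_cons_cons.1 h).2
    simp only [lf, unl, Finset.union_sdiff_of_subset h1]
    rw [ih a h2]

private lemma chain'_cons_of (p : Finset ℕ) (c : List (Finset ℕ))
    (hc : List.Chain' (· ⊆ ·) c) (hp : ∀ a, c.head? = some a → p ⊆ a) :
    List.Chain' (· ⊆ ·) (p :: c) := by
  cases c with
  | nil => exact List.IsChain.singleton _
  | cons a t => exact List.isChain_cons_cons.2 ⟨hp a rfl, hc⟩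

private lemma label_inj {c d : List (Finset ℕ)}
    (hc : List.Chain' (· ⊆ ·) (∅ :: c)) (hd : List.Chain' (· ⊆ ·) (∅ :: d))
    (h : label c = label d) : c = d := by
  have hc' := unl_lf ∅ c hc
  have hd' := unl_lf ∅ d hd
  rw [label_eq_lf, label_eq_lf] at h
  rw [← hc', ← hd', h]


/-! ### chain and label structure -/

private lemma chain_map_sub {c : List (Finset ℕ)} (h : List.Chain' (· ⊂ ·) c) :
    List.Chain' (· ⊆ ·) c :=
  List.IsChain.imp (fun _ _ hab => hab.subset) h

private lemma getLastD_irrel {v : List (Finset ℕ)} (hv : v ≠ []) (p q : Finset ℕ) :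
    v.getLastD p = v.getLastD q := by
  cases v with
  | nil => exact absurd rfl hv
  | cons a t => rw [getLastD_cons', getLastD_cons']

private lemma getLastD_append_ne {u v : List (Finset ℕ)} (hv : v ≠ []) (p : Finset ℕ) :
    (u ++ v).getLastD p = v.getLastD p := by
  induction u generalizing p with
  | nil => rfl
  | cons a u ih =>
    rw [List.cons_append, getLastD_cons', ih a, getLastD_irrel hv a p]

private lemma chain_head_sub_last {a : Finset ℕ} {t : List (Finset ℕ)}
    (h : List.Chain' (· ⊆ ·) (a :: t)) : a ⊆ t.getLastD a := by
  induction t generalizing a with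
  | nil => exact Finset.Subset.refl a
  | cons b t ih =>
    rw [getLastD_cons']
    exact Finset.Subset.trans (List.isChain_cons_cons.1 h).1 (ih (List.isChain_cons_cons.1 h).2)

private lemma lf_subset {p : Finset ℕ} {c : List (Finset ℕ)}
    (h : List.Chain' (· ⊆ ·) (p :: c)) : ∀ B ∈ lf p c, B ⊆ c.getLastD p := by
  induction c generalizing p with
  | nil => intro B hB; simp [lf] at hB
  | cons a t ih =>
    intro B hB
    have h2 : List.Chain' (· ⊆ ·) (a :: t) := (List.isChain_cons_cons.1 h).2
    rw [lf] at hB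
    rw [getLastD_cons']
    rcases List.mem_cons.1 hB with rfl | hB
    · exact Finset.Subset.trans Finset.sdiff_subset (chain_head_sub_last h2)
    · exact ih h2 B hB

private lemma lf_disj_base {p : Finset ℕ} {c : List (Finset ℕ)}
    (h : List.Chain' (· ⊆ ·) (p :: c)) : ∀ B ∈ lf p c, Disjoint p B := by
  induction c generalizing p with
  | nil => intro B hB; simp [lf] at hB
  | cons a t ih =>
    intro B hB
    have h1 : p ⊆ a := (List.isChain_cons_cons.1 h).1
    have h2 : List.Chain' (· ⊆ ·) (a :: t) := (List.isChain_cons_cons.1 h).2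
    rw [lf] at hB
    rcases List.mem_cons.1 hB with rfl | hB
    · exact Finset.disjoint_sdiff
    · exact (ih h2 B hB).mono_left h1

private lemma lf_pairwise {p : Finset ℕ} {c : List (Finset ℕ)}
    (h : List.Chain' (· ⊆ ·) (p :: c)) : (lf p c).Pairwise Disjoint := by
  induction c generalizing p with
  | nil => exact List.Pairwise.nil
  | cons a t ih =>
    have h2 : List.Chain' (· ⊆ ·) (a :: t) := (List.isChain_cons_cons.1 h).2
    refine List.Pairwise.cons ?_ (ih h2)
    intro B hB
    exact (lf_disj_base h2 B hB).mono_left Finset.sdiff_subset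

private lemma lf_block_nonempty {p : Finset ℕ} {c : List (Finset ℕ)}
    (h : List.Chain' (· ⊂ ·) (p :: c)) : ∀ B ∈ lf p c, B.Nonempty := by
  induction c generalizing p with
  | nil => intro B hB; simp [lf] at hB
  | cons a t ih =>
    intro B hB
    have h1 : p ⊂ a := (List.isChain_cons_cons.1 h).1
    have h2 : List.Chain' (· ⊂ ·) (a :: t) := (List.isChain_cons_cons.1 h).2
    rw [lf] at hB
    rcases List.mem_cons.1 hB with rfl | hB
    · exact Finset.sdiff_nonempty.2 (fun hsub => h1.2 hsub)
    · exact ih h2 B hB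

private lemma lf_mem_of_mem {p : Finset ℕ} {c : List (Finset ℕ)}
    (h : List.Chain' (· ⊆ ·) (p :: c)) {x : ℕ} (hx : x ∈ c.getLastD p) (hxp : x ∉ p) :
    ∃ B ∈ lf p c, x ∈ B := by
  induction c generalizing p with
  | nil => exact absurd hx hxp
  | cons a t ih =>
    have h2 : List.Chain' (· ⊆ ·) (a :: t) := (List.isChain_cons_cons.1 h).2
    rw [getLastD_cons'] at hx
    by_cases hxa : x ∈ a
    · exact ⟨a \ p, List.mem_cons_self, Finset.mem_sdiff.2 ⟨hxa, hxp⟩⟩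
    · obtain ⟨B, hB, hxB⟩ := ih h2 hx hxa
      exact ⟨B, List.mem_cons_of_mem _ hB, hxB⟩

private lemma carrier_concat (c : List (Finset ℕ)) (t : Finset ℕ) : carrier (c ++ [t]) = t := by
  show (c ++ [t]).getLastD ∅ = t
  rw [getLastD_append_ne (by simp) ∅]
  simp [List.getLastD]

private lemma carrier_mem {c : List (Finset ℕ)} (hc : c ≠ []) : carrier c ∈ c := by
  induction c with
  | nil => exact absurd rfl hc
  | cons a t ih =>
    show (a :: t).getLastD ∅ ∈ a :: t
    rw [getLastD_cons']
    cases t with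
    | nil => simp [List.getLastD]
    | cons b u =>
      have h1 : carrier (b :: u) ∈ b :: u := ih (by simp)
      have h2 : (b :: u).getLastD a = (b :: u).getLastD ∅ := getLastD_irrel (by simp) a ∅
      rw [h2]
      exact List.mem_cons_of_mem _ h1

private lemma bary_chain {L : AbsSC} {c : List (Finset ℕ)} (hc : IsBarySimplex L c) :
    List.Chain' (· ⊆ ·) (∅ :: c) :=
  chain'_cons_of _ _ (chain_map_sub hc.2.1) (fun a _ => Finset.empty_subset a)

private lemma bary_chain_strict {L : AbsSC} {c : List (Finset ℕ)} (hc : IsBarySimplex L c) :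
    List.Chain' (· ⊂ ·) (∅ :: c) := by
  cases c with
  | nil => exact List.IsChain.singleton _
  | cons a t =>
    refine List.isChain_cons_cons.2 ⟨?_, hc.2.1⟩
    have ha : a ∈ L.faces := hc.2.2 a (List.mem_cons_self)
    exact Finset.empty_ssubset.2 (L.nonempty_of_mem a ha)

private lemma bary_label_nonempty {L : AbsSC} {c : List (Finset ℕ)} (hc : IsBarySimplex L c) :
    ∀ B ∈ label c, B.Nonempty := by
  rw [label_eq_lf]; exact lf_block_nonempty (bary_chain_strict hc)

private lemma bary_label_pairwise {L : AbsSC} {c : List (Finset ℕ)} (hc : IsBarySimplex L c) :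
    (label c).Pairwise Disjoint := by
  rw [label_eq_lf]; exact lf_pairwise (bary_chain hc)

private lemma bary_label_subset {L : AbsSC} {c : List (Finset ℕ)} (hc : IsBarySimplex L c) :
    ∀ B ∈ label c, B ⊆ carrier c := by
  rw [label_eq_lf]; exact lf_subset (bary_chain hc)

private lemma bary_label_mem {L : AbsSC} {c : List (Finset ℕ)} (hc : IsBarySimplex L c)
    {x : ℕ} (hx : x ∈ carrier c) : ∃ B ∈ label c, x ∈ B := by
  rw [label_eq_lf]
  exact lf_mem_of_mem (bary_chain hc) hx (Finset.notMem_empty x)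

private lemma bary_carrier_mem_faces {L : AbsSC} {c : List (Finset ℕ)} (hc : IsBarySimplex L c) :
    carrier c ∈ L.faces := hc.2.2 _ (carrier_mem hc.1)

private lemma bary_label_inj {L : AbsSC} {c d : List (Finset ℕ)} (hc : IsBarySimplex L c)
    (hd : IsBarySimplex L d) (h : label c = label d) : c = d :=
  label_inj (bary_chain hc) (bary_chain hd) h

/-! ### facets -/

private lemma sublist_split {c d : List (Finset ℕ)} (hs : c.Sublist d)
    (hl : c.length + 1 = d.length) : ∃ u a w, d = u ++ a :: w ∧ c = u ++ w := by
  induction hs with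
  | slnil => simp at hl
  | @cons l₁ l₂ a hs ih =>
    have : l₁.length = l₂.length := by
      have := hs.length_le; simp at hl; omega
    exact ⟨[], a, l₂, rfl, by simp [hs.eq_of_length this]⟩
  | @cons_cons l₁ l₂ a hs ih =>
    obtain ⟨u, b, w, h1, h2⟩ := ih (by simpa using hl)
    exact ⟨a::u, b, w, by simp [h1], by simp [h2]⟩

private lemma chain_prev_sub {p : Finset ℕ} {u w : List (Finset ℕ)} {a : Finset ℕ}
    (h : List.Chain' (· ⊆ ·) (p :: (u ++ a :: w))) : u.getLastD p ⊆ a := by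
  induction u generalizing p with
  | nil => exact (List.isChain_cons_cons.1 h).1
  | cons b u ih =>
    rw [getLastD_cons']
    exact ih (List.isChain_cons_cons.1 h).2

private lemma chain_prev_ssub {p : Finset ℕ} {u w : List (Finset ℕ)} {a : Finset ℕ}
    (hu : u ≠ []) (h : List.Chain' (· ⊂ ·) (u ++ a :: w)) : u.getLastD p ⊂ a := by
  induction u generalizing p with
  | nil => exact absurd rfl hu
  | cons b u ih =>
    rw [getLastD_cons']
    cases u with
    | nil => exact (List.isChain_cons_cons.1 h).1
    | cons e u' => exact ih (by simp) (List.isChain_cons_cons.1 h).2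

private lemma bary_of_facet {L : AbsSC} {c d : List (Finset ℕ)} (hd : IsBarySimplex L d)
    (h : FacetChain c d) (hc : c ≠ []) : IsBarySimplex L c :=
  ⟨hc, hd.2.1.sublist h.1, fun t ht => hd.2.2 t (h.1.subset ht)⟩

private lemma facet_cases {L : AbsSC} {c d : List (Finset ℕ)} (hd : IsBarySimplex L d)
    (hc : IsBarySimplex L c) (h : FacetChain c d) :
    (∃ B : Finset ℕ, B.Nonempty ∧ label d = label c ++ [B] ∧
        carrier c = carrier d \ B ∧ B ⊆ carrier d ∧ carrier c ⊂ carrier d) ∨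
    (∃ P R : List (Finset ℕ), ∃ X Y : Finset ℕ, label d = P ++ X :: Y :: R ∧
        label c = P ++ (X ∪ Y) :: R ∧ carrier c = carrier d) := by
  obtain ⟨u, a, w, hdw, hcw⟩ := sublist_split h.1 h.2
  have hchain : List.Chain' (· ⊆ ·) (∅ :: d) := bary_chain hd
  cases w with
  | nil =>
    left
    have hu : u ≠ [] := by simpa [hcw] using hc.1
    have hpu : u.getLastD ∅ ⊂ a := by
      have hst := hd.2.1
      rw [hdw] at hst
      exact chain_prev_ssub hu hst
    have hcarrd : carrier d = a := by rw [hdw]; exact carrier_concat u a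
    have hcarrc : carrier c = u.getLastD ∅ := by
      rw [hcw]; show (u ++ []).getLastD ∅ = _; rw [List.append_nil]
    refine ⟨a \ u.getLastD ∅, Finset.sdiff_nonempty.2 (fun hsub => hpu.2 hsub), ?_, ?_, ?_, ?_⟩
    · rw [hdw, hcw, label_eq_lf, label_eq_lf, lf_append]
      simp [lf]
    · rw [hcarrd, hcarrc]
      ext x
      simp only [Finset.mem_sdiff, not_and, not_not]
      constructor
      · intro hx; exact ⟨hpu.1 hx, fun _ => hx⟩
      · rintro ⟨hxa, himp⟩; exact himp hxa
    · rw [hcarrd]; exact Finset.sdiff_subset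
    · rw [hcarrd, hcarrc]; exact hpu
  | cons b w' =>
    right
    have hpu : u.getLastD ∅ ⊆ a := by
      rw [hdw] at hchain; exact chain_prev_sub hchain
    have hab : a ⊆ b := by
      have h' : List.Chain' (· ⊆ ·) (∅ :: ((u ++ [a]) ++ b :: w')) := by
        rw [hdw] at hchain
        simpa using hchain
      have h2 := chain_prev_sub h'
      rwa [getLastD_append_ne (by simp) ∅, (by simp [List.getLastD] : ([a] : List (Finset ℕ)).getLastD ∅ = a)] at h2
    refine ⟨label u, lf b w', a \ u.getLastD ∅, b \ a, ?_, ?_, ?_⟩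
    · rw [hdw, label_eq_lf, lf_append, label_eq_lf]
      simp [lf]
    · rw [hcw, label_eq_lf, lf_append, label_eq_lf]
      have huni : a \ u.getLastD ∅ ∪ b \ a = b \ u.getLastD ∅ := by
        ext x
        simp only [Finset.mem_union, Finset.mem_sdiff]
        constructor
        · rintro (⟨h1, h2⟩ | ⟨h1, h2⟩)
          · exact ⟨hab h1, h2⟩
          · exact ⟨h1, fun hx => h2 (hpu hx)⟩
        · rintro ⟨h1, h2⟩
          by_cases hxa : x ∈ a
          · exact Or.inl ⟨hxa, h2⟩
          · exact Or.inr ⟨h1, hxa⟩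
      show lf ∅ u ++ (b \ u.getLastD ∅) :: lf b w' = lf ∅ u ++ (a \ u.getLastD ∅ ∪ b \ a) :: lf b w'
      rw [huni]
    · rw [hdw, hcw]
      show (u ++ b :: w').getLastD ∅ = (u ++ a :: b :: w').getLastD ∅
      rw [getLastD_append_ne (by simp) ∅, getLastD_append_ne (by simp) ∅,
        getLastD_cons', getLastD_cons', getLastD_cons']

/-! ### position uniqueness and list splitting -/

private lemma get?_block (u : List (Finset ℕ)) (B : Finset ℕ) (w : List (Finset ℕ)) :
    (u ++ B :: w)[u.length]? = some B := by
  rw [List.getElem?_append_right le_rfl]; simp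

private lemma pairwise_get?_disj {P : List (Finset ℕ)} (hP : P.Pairwise Disjoint) {i j : ℕ}
    (hij : i < j) {A B : Finset ℕ} (hA : P[i]? = some A) (hB : P[j]? = some B) :
    Disjoint A B := by
  obtain ⟨hi, hA'⟩ := List.getElem?_eq_some_iff.1 hA
  obtain ⟨hj, hB'⟩ := List.getElem?_eq_some_iff.1 hB
  have := (List.pairwise_iff_getElem.1 hP) i j hi hj hij
  rwa [hA', hB'] at this

private lemma pos_unique {P : List (Finset ℕ)} (hP : P.Pairwise Disjoint)
    {l₁ r₁ l₂ r₂ : List (Finset ℕ)} {B₁ B₂ : Finset ℕ} {v : ℕ}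
    (h1 : P = l₁ ++ B₁ :: r₁) (h2 : P = l₂ ++ B₂ :: r₂) (m1 : v ∈ B₁) (m2 : v ∈ B₂) :
    l₁ = l₂ ∧ B₁ = B₂ ∧ r₁ = r₂ := by
  have g1 : P[l₁.length]? = some B₁ := by rw [h1]; exact get?_block _ _ _
  have g2 : P[l₂.length]? = some B₂ := by rw [h2]; exact get?_block _ _ _
  have hlen : l₁.length = l₂.length := by
    rcases lt_trichotomy l₁.length l₂.length with hlt | heq | hgt
    · exact absurd m2 (Finset.disjoint_left.1 (pairwise_get?_disj hP hlt g1 g2) m1)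
    · exact heq
    · exact absurd m1 (Finset.disjoint_left.1 (pairwise_get?_disj hP hgt g2 g1) m2)
  have heq : l₁ ++ B₁ :: r₁ = l₂ ++ B₂ :: r₂ := by rw [← h1, h2]
  obtain ⟨e1, e2⟩ := List.append_inj heq hlen
  have e3 : B₁ = B₂ := by injection e2
  have e4 : r₁ = r₂ := by injection e2
  exact ⟨e1, e3, e4⟩

private lemma append_cons_cases {α : Type} {u v w z : List α} {a b : α}
    (h : u ++ a :: v = w ++ b :: z) :
    (u = w ∧ a = b ∧ v = z) ∨
    (∃ mid, w = u ++ a :: mid ∧ v = mid ++ b :: z) ∨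
    (∃ mid, u = w ++ b :: mid ∧ z = mid ++ a :: v) := by
  induction u generalizing w with
  | nil =>
    cases w with
    | nil =>
      simp only [List.nil_append] at h
      injection h with h1 h2
      exact Or.inl ⟨rfl, h1, h2⟩
    | cons x w' =>
      simp only [List.nil_append, List.cons_append] at h
      injection h with h1 h2
      exact Or.inr (Or.inl ⟨w', by rw [h1]; rfl, h2⟩)
  | cons x u' ih =>
    cases w with
    | nil =>
      simp only [List.nil_append, List.cons_append] at h
      injection h with h1 h2
      exact Or.inr (Or.inr ⟨u', by rw [h1]; rfl, h2.symm⟩)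
    | cons y w' =>
      simp only [List.cons_append] at h
      injection h with h1 h2
      rcases ih h2 with ⟨e1, e2, e3⟩ | ⟨mid, e1, e2⟩ | ⟨mid, e1, e2⟩
      · exact Or.inl ⟨by rw [h1, e1], e2, e3⟩
      · exact Or.inr (Or.inl ⟨mid, by rw [h1, e1]; rfl, e2⟩)
      · exact Or.inr (Or.inr ⟨mid, by rw [h1, e1]; rfl, e2⟩)

/-! ### reconstruction: a label determines its chain -/

private def fu (p : Finset ℕ) (P : List (Finset ℕ)) : Finset ℕ := P.foldl (· ∪ ·) p

private lemma unl_append (p : Finset ℕ) (P Q : List (Finset ℕ)) :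
    unl p (P ++ Q) = unl p P ++ unl (fu p P) Q := by
  induction P generalizing p with
  | nil => rfl
  | cons B P ih =>
    show (p ∪ B) :: unl (p ∪ B) (P ++ Q) = ((p ∪ B) :: unl (p ∪ B) P) ++ unl (fu p (B :: P)) Q
    rw [ih (p ∪ B)]
    rfl

private lemma fu_lf (p : Finset ℕ) (c : List (Finset ℕ))
    (h : List.Chain' (· ⊆ ·) (p :: c)) : fu p (lf p c) = c.getLastD p := by
  induction c generalizing p with
  | nil => rfl
  | cons a t ih =>
    have h1 : p ⊆ a := (List.isChain_cons_cons.1 h).1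
    have h2 : List.Chain' (· ⊆ ·) (a :: t) := (List.isChain_cons_cons.1 h).2
    show fu (p ∪ (a \ p)) (lf a t) = (a :: t).getLastD p
    rw [Finset.union_sdiff_of_subset h1, getLastD_cons']
    exact ih a h2

private lemma label_snoc {L : AbsSC} {c d : List (Finset ℕ)} (hc : IsBarySimplex L c)
    (hd : IsBarySimplex L d) {B : Finset ℕ} (h : label d = label c ++ [B]) :
    d = c ++ [carrier c ∪ B] := by
  have h1 : unl ∅ (label d) = d := by rw [label_eq_lf]; exact unl_lf ∅ d (bary_chain hd)
  have h2 : unl ∅ (label c) = c := by rw [label_eq_lf]; exact unl_lf ∅ c (bary_chain hc)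
  have h3 : fu ∅ (label c) = carrier c := by rw [label_eq_lf]; exact fu_lf ∅ c (bary_chain hc)
  rw [h, unl_append, h2, h3] at h1
  exact h1.symm

private lemma snoc_facet {c c' : List (Finset ℕ)} {t : Finset ℕ}
    (h : FacetChain c' (c ++ [t])) (hne : c' ≠ c) : carrier c' = t := by
  obtain ⟨u, a, w, h1, h2⟩ := sublist_split h.1 h.2
  cases w with
  | nil =>
    obtain ⟨e1, e2⟩ := List.append_inj' h1 rfl
    rw [h2, List.append_nil] at hne
    exact absurd e1.symm hne
  | cons b w' =>
    have hcar : carrier (c ++ [t]) = t := carrier_concat c t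
    rw [h1] at hcar
    have e1 : carrier (u ++ a :: b :: w') = (b :: w').getLastD ∅ := by
      show (u ++ a :: b :: w').getLastD ∅ = _
      rw [getLastD_append_ne (by simp) ∅, getLastD_cons', getLastD_irrel (by simp) a ∅]
    have e2 : carrier c' = (b :: w').getLastD ∅ := by
      rw [h2]
      show (u ++ b :: w').getLastD ∅ = _
      rw [getLastD_append_ne (by simp) ∅]
    rw [e2, ← e1, hcar]

/-! ### classification of `DeltaPair` branches -/

private def Rul (F : Finset ℕ → Finset ℕ → Prop) (c d : List (Finset ℕ)) : Prop :=
  ∃ s v, F s (insert v s) ∧ v ∉ s ∧ carrier c = s ∧ carrier d = insert v s ∧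
    label d = label c ++ [{v}]

private lemma delta_not_ru {L : AbsSC} {F : Finset ℕ → Finset ℕ → Prop}
    {Ord : Finset ℕ → List ℕ} {c d : List (Finset ℕ)}
    (hcd : DeltaPair L F Ord c d) (h : ¬ Rul F c d) : carrier d = carrier c := by
  rcases hcd.2.2 with ⟨_, hcar, _⟩ | ⟨s, v, hsv, hv, hbr⟩
  · exact hcar
  · rcases hbr with ⟨e1, e2, e3⟩ | ⟨e1, e2, _⟩
    · exact absurd ⟨s, v, hsv, hv, e1, e2, e3⟩ h
    · rw [e1, e2]

private lemma delta_rule3 {L : AbsSC} {F : Finset ℕ → Finset ℕ → Prop}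
    {Ord : Finset ℕ → List ℕ} {c d : List (Finset ℕ)} (hF : IsDVF L F)
    {s : Finset ℕ} {v : ℕ} (hsv : F s (insert v s)) (hv : v ∉ s)
    (hcar : carrier c = insert v s) (hcd : DeltaPair L F Ord c d) :
    carrier d = carrier c ∧ ∃ l I r, v ∉ I ∧ I.Nonempty ∧
      label c = l ++ (insert v I) :: r ∧ label d = l ++ ({v} :: I :: r) := by
  obtain ⟨h1, h2, h3, h4⟩ := hF
  rcases hcd.2.2 with ⟨hcrit, _, _⟩ | ⟨s₂, v₂, hsv₂, hv₂, hbr⟩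
  · exact absurd (hcar ▸ hsv) (hcrit.2 s)
  · rcases hbr with ⟨e1, e2, e3⟩ | ⟨e1, e2, l, I, r, hvI, hIne, hlc, hld⟩
    · have hs : s₂ = insert v s := by rw [← e1, hcar]
      subst hs
      exact absurd hsv₂ (h4 _ _ _ hsv)
    · have hA : F s₂ (insert v s) := by
        have := hsv₂
        rwa [show insert v₂ s₂ = insert v s from by rw [← e1, hcar]] at this
      have hs₂ : s₂ = s := h3 _ _ _ hA hsv
      have hv₂v : v₂ = v := by
        have hmem : v₂ ∈ insert v s := by
          rw [← hcar, e1, hs₂]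
          exact Finset.mem_insert_self v₂ s
        rcases Finset.mem_insert.1 hmem with h | h
        · exact h
        · exact absurd h (hs₂ ▸ hv₂)
      refine ⟨by rw [e1, e2], l, I, r, ?_, hIne, ?_, ?_⟩
      · rwa [hv₂v] at hvI
      · rwa [hv₂v] at hlc
      · rwa [hv₂v] at hld

private lemma delta_crit {L : AbsSC} {F : Finset ℕ → Finset ℕ → Prop}
    {Ord : Finset ℕ → List ℕ} {c d : List (Finset ℕ)}
    (hcrit : CriticalF F (carrier c)) (hcd : DeltaPair L F Ord c d) :
    carrier d = carrier c ∧ CritPair (Ord (carrier c)) (label c) (label d) := by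
  rcases hcd.2.2 with ⟨_, hcar, hcp⟩ | ⟨s, v, hsv, hv, hbr⟩
  · exact ⟨hcar, hcp⟩
  · rcases hbr with ⟨e1, _, _⟩ | ⟨e1, _, _⟩
    · exact absurd (e1 ▸ hsv) (hcrit.1 _)
    · exact absurd (e1 ▸ hsv) (hcrit.2 s)

private lemma delta_lower_cell {L : AbsSC} {F : Finset ℕ → Finset ℕ → Prop}
    {Ord : Finset ℕ → List ℕ} {c d : List (Finset ℕ)} (hF : IsDVF L F)
    {t : Finset ℕ} (hst : F (carrier c) t) (hcd : DeltaPair L F Ord c d) :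
    Rul F c d := by
  obtain ⟨h1, h2, h3, h4⟩ := hF
  rcases hcd.2.2 with ⟨hcrit, _, _⟩ | ⟨s, v, hsv, hv, hbr⟩
  · exact absurd hst (hcrit.1 t)
  · rcases hbr with ⟨e1, e2, e3⟩ | ⟨e1, _, _⟩
    · exact ⟨s, v, hsv, hv, e1, e2, e3⟩
    · exact absurd hst (h4 _ _ _ (e1 ▸ hsv))

/-! ### `gcs` positional lemmas for the critical pairing -/

private lemma nodup_get?_inj {l : List ℕ} (h : l.Nodup) {i j : ℕ} {a : ℕ}
    (hi : l[i]? = some a) (hj : l[j]? = some a) : i = j := by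
  obtain ⟨hi', hi''⟩ := List.getElem?_eq_some_iff.1 hi
  obtain ⟨hj', hj''⟩ := List.getElem?_eq_some_iff.1 hj
  have : l[i] = l[j] := by rw [hi'', hj'']
  exact (List.Nodup.getElem_inj_iff h).1 this

private def sLam (o : List ℕ) : List (Finset ℕ) := (o.map (fun a => ({a} : Finset ℕ))).reverse

private lemma sLam_get? (o : List ℕ) (k : ℕ) :
    (sLam o)[k]? = (o.reverse[k]?).map (fun a => ({a} : Finset ℕ)) := by
  rw [sLam, ← List.map_reverse, List.getElem?_map]

private lemma gcs_eq_cpl' (q : List (Finset ℕ)) (o : List ℕ) :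
    gcs q (o.map (fun a => ({a} : Finset ℕ))) = cpl q.reverse (sLam o) := rfl

/-- position of the split singleton `{x}` is strictly beyond the matched suffix -/
private lemma crit_pos {o : List ℕ} (ho : o.Nodup) {q l r : List (Finset ℕ)}
    {I : Finset ℕ} {x : ℕ} {g : ℕ}
    (hg : cpl q.reverse (sLam o) = g) (hx : o.reverse[g]? = some x)
    (hq : q = l ++ {x} :: I :: r) : g ≤ r.length := by
  have hrev : q.reverse = (r.reverse ++ [I]) ++ {x} :: l.reverse := by
    rw [hq]; simp
  have hget : q.reverse[r.length + 1]? = some {x} := by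
    have := get?_block (r.reverse ++ [I]) {x} l.reverse
    simpa [hrev] using this
  by_contra hcon
  push_neg at hcon
  rcases Nat.lt_or_ge (r.length + 1) g with hlt | hge
  · obtain ⟨a, ha1, ha2⟩ := cpl_agree hg _ hlt
    rw [hget] at ha1
    obtain rfl : a = {x} := by injection ha1 with h; exact h.symm
    rw [sLam_get?] at ha2
    obtain ⟨y, hy1, hy2⟩ := Option.map_eq_some_iff.1 ha2
    have hyx : y = x := Finset.singleton_injective hy2
    subst hyx
    have := nodup_get?_inj (List.nodup_reverse.2 ho) hy1 hx
    omega
  · have hpg : r.length + 1 = g := by omega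
    apply cpl_not_agree hg
    refine ⟨{x}, by rw [← hpg]; exact hget, ?_⟩
    rw [sLam_get?, hx]
    rfl

/-- transfer of `gcs` from the upper simplex of a critical pair to the lower -/
private lemma crit_gcs_transfer {o : List ℕ} (ho : o.Nodup) {l r : List (Finset ℕ)}
    {I : Finset ℕ} {x : ℕ} {g : ℕ} (hxI : x ∉ I) (hIne : I.Nonempty)
    (hg : cpl (l ++ {x} :: I :: r).reverse (sLam o) = g) (hx : o.reverse[g]? = some x) :
    cpl (l ++ (insert x I) :: r).reverse (sLam o) = g := by
  have hgr : g ≤ r.length := crit_pos ho hg hx rfl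
  have hrevq : (l ++ {x} :: I :: r).reverse = r.reverse ++ I :: {x} :: l.reverse := by simp
  have hrevc : (l ++ (insert x I) :: r).reverse = r.reverse ++ (insert x I) :: l.reverse := by simp
  have hne : insert x I ≠ {x} := by
    obtain ⟨y, hy⟩ := hIne
    intro hcontra
    have : y ∈ ({x} : Finset ℕ) := hcontra ▸ (Finset.mem_insert_of_mem hy)
    exact hxI ((Finset.mem_singleton.1 this) ▸ hy)
  rw [cpl_iff]
  constructor
  · intro k hk
    obtain ⟨a, ha1, ha2⟩ := cpl_agree hg k hk
    refine ⟨a, ?_, ha2⟩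
    rw [hrevq] at ha1
    rw [hrevc]
    have hkr : k < r.reverse.length := by simp; omega
    rw [List.getElem?_append_left hkr] at ha1
    rw [List.getElem?_append_left hkr]
    exact ha1
  · rcases Nat.lt_or_ge g r.length with hlt | hge
    · intro ⟨a, ha1, ha2⟩
      apply cpl_not_agree hg
      refine ⟨a, ?_, ha2⟩
      have hkr : g < r.reverse.length := by simp; omega
      rw [hrevc, List.getElem?_append_left hkr] at ha1
      rw [hrevq, List.getElem?_append_left hkr]
      exact ha1
    · have hgr' : g = r.length := by omega
      intro ⟨a, ha1, ha2⟩
      rw [hrevc, hgr'] at ha1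
      have : (r.reverse ++ (insert x I) :: l.reverse)[r.length]? = some (insert x I) := by
        have := get?_block r.reverse (insert x I) l.reverse
        simpa using this
      rw [this] at ha1
      obtain rfl : a = insert x I := by injection ha1 with h; exact h.symm
      rw [sLam_get?, hx] at ha2
      simp only [Option.map_some] at ha2
      exact hne (by injection ha2 with h; exact h.symm)

/-! ### position of the distinguished block, cyclic descent -/

private lemma posv_spec {v : ℕ} {P l r : List (Finset ℕ)} {B : Finset ℕ}
    (hP : P.Pairwise Disjoint) (h : P = l ++ B :: r) (hvB : v ∈ B) :
    P.findIdx (fun C => decide (v ∈ C)) = l.length := by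
  subst h
  induction l with
  | nil => simp [List.findIdx_cons, hvB]
  | cons A l ih =>
    rw [List.cons_append] at hP ⊢
    have hdisj : Disjoint A B := (List.pairwise_cons.1 hP).1 B (by simp)
    have hvA : v ∉ A := fun hva => (Finset.disjoint_left.1 hdisj hva) hvB
    rw [List.findIdx_cons]
    simp [hvA, ih (List.pairwise_cons.1 hP).2]

private lemma cyclic_lex_false {n : ℕ} (hn : 0 < n) (f h : ℕ → ℕ)
    (hstep : ∀ i < n, f (i+1) < f i ∨ (f (i+1) = f i ∧ h (i+1) < h i))
    (hf : f n = f 0) (hh : h n = h 0) : False := by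
  have hmono : ∀ i < n, f (i+1) ≤ f i := by
    intro i hi
    rcases hstep i hi with h1 | ⟨h1, _⟩
    · omega
    · omega
  have hdec : ∀ j ≤ n, f j ≤ f 0 := by
    intro j hj
    induction j with
    | zero => exact le_rfl
    | succ j ih => exact le_trans (hmono j (by omega)) (ih (by omega))
  have hconst : ∀ i ≤ n, f i = f 0 := by
    intro i hi
    refine le_antisymm (hdec i hi) ?_
    rw [← hf]
    have : ∀ j ≤ n - i, f (i + j) ≤ f i := by
      intro j hj
      induction j with
      | zero => exact le_rfl
      | succ j ih =>
        show f (i + j + 1) ≤ f i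
        have := hmono (i + j) (by omega)
        have := ih (by omega)
        omega
    have := this (n - i) le_rfl
    rw [show i + (n - i) = n by omega] at this
    exact this
  have hdecH : ∀ i < n, h (i+1) < h i := by
    intro i hi
    rcases hstep i hi with h1 | ⟨_, h2⟩
    · have e1 := hconst i (by omega)
      have e2 := hconst (i+1) (by omega)
      omega
    · exact h2
  have : ∀ j ≤ n, h j + j ≤ h 0 := by
    intro j hj
    induction j with
    | zero => omega
    | succ j ih =>
      have := hdecH j (by omega)
      have := ih (by omega)
      omega
  have := this n le_rfl
  omega

private lemma union_ne_singleton {X Y : Finset ℕ} (hX : X.Nonempty) (hY : Y.Nonempty)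
    (hd : Disjoint X Y) (x : ℕ) : X ∪ Y ≠ {x} := by
  intro hcon
  obtain ⟨ξ, hξ⟩ := hX
  obtain ⟨η, hη⟩ := hY
  have h1 : ξ ∈ X ∪ Y := Finset.mem_union_left _ hξ
  have h2 : η ∈ X ∪ Y := Finset.mem_union_right _ hη
  rw [hcon, Finset.mem_singleton] at h1 h2
  exact (Finset.disjoint_left.1 hd hξ) (h1 ▸ h2 ▸ hη)

private lemma rev_get?_lt {r W : List (Finset ℕ)} {A : Finset ℕ} {k : ℕ} (hk : k < r.length) :
    (r.reverse ++ A :: W)[k]? = r.reverse[k]? := List.getElem?_append_left (by simpa using hk)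

private lemma rev_get?_eq {r W : List (Finset ℕ)} {A : Finset ℕ} :
    (r.reverse ++ A :: W)[r.length]? = some A := by
  have := get?_block r.reverse A W
  simpa using this

private lemma cpl_tail_eq {Λ : List (Finset ℕ)} {W₁ W₂ r : List (Finset ℕ)} {A : Finset ℕ}
    {g : ℕ} (hg : g ≤ r.length) (h1 : cpl (W₁ ++ A :: r).reverse Λ = g) :
    cpl (W₂ ++ A :: r).reverse Λ = g := by
  have e1 : (W₁ ++ A :: r).reverse = r.reverse ++ A :: W₁.reverse := by simp
  have e2 : (W₂ ++ A :: r).reverse = r.reverse ++ A :: W₂.reverse := by simp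
  rw [e1] at h1
  rw [e2]
  refine cpl_congr (fun k hk => ?_) h1
  rcases Nat.lt_or_ge k r.length with hlt | hge
  · rw [rev_get?_lt hlt, rev_get?_lt hlt]
  · have hk' : k = r.length := by omega
    subst hk'
    rw [rev_get?_eq, rev_get?_eq]

/-! ### the in-cell step lemma for a non-critical pair cell -/

private lemma pair_cell_step {L : AbsSC} {F : Finset ℕ → Finset ℕ → Prop}
    {Ord : Finset ℕ → List ℕ} (hF : IsDVF L F) {s : Finset ℕ} {v : ℕ}
    (hsv : F s (insert v s)) (hv : v ∉ s) {c c' d : List (Finset ℕ)}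
    (hc : IsBarySimplex L c) (hc' : IsBarySimplex L c')
    (hcar : carrier c = insert v s) (hcar' : carrier c' = insert v s)
    (hcd : DeltaPair L F Ord c d) (hfac : FacetChain c' d) (hne : c' ≠ c)
    (hlow : ∃ d', DeltaPair L F Ord c' d') :
    (label c').findIdx (fun C => decide (v ∈ C)) <
      (label c).findIdx (fun C => decide (v ∈ C)) := by
  obtain ⟨hdcar, l, I, r, hvI, hIne, hlc, hld⟩ := delta_rule3 hF hsv hv hcar hcd
  obtain ⟨d', hcd'⟩ := hlow
  obtain ⟨_, l₂, I₂, r₂, hvI₂, hIne₂, hlc₂, _⟩ := delta_rule3 hF hsv hv hcar' hcd'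
  have hd : IsBarySimplex L d := hcd.2.1
  have hPd := bary_label_pairwise hd
  have hPc' := bary_label_pairwise hc'
  have hPc := bary_label_pairwise hc
  rcases facet_cases hd hc' hfac with ⟨B, _, _, _, _, hlt⟩ | ⟨P, R, X, Y, hmerge, hlc', _⟩
  · rw [hcar', hdcar, hcar] at hlt
    exact absurd hlt (ssubset_irrefl _)
  · have hEq : P ++ X :: (Y :: R) = l ++ {v} :: (I :: r) := by rw [← hmerge, hld]
    have hins : ∀ Z : Finset ℕ, Z ∪ {v} = insert v Z := by
      intro Z; rw [Finset.insert_eq, Finset.union_comm]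
    rcases append_cons_cases hEq with ⟨e1, e2, e3⟩ | ⟨mid, e1, e2⟩ | ⟨mid, e1, e2⟩
    · -- c' = c, contradiction
      injection e3 with e4 e5
      exfalso
      apply hne
      apply bary_label_inj hc' hc
      rw [hlc', hlc, e1, e2, e4, e5, Finset.insert_eq]
    · cases mid with
      | nil =>
        simp only [List.nil_append] at e2
        injection e2 with e3 e4
        -- label c' = P ++ (X ∪ {v}) :: I :: r, l = P ++ [X]
        have hdecc' : label c' = P ++ (insert v X) :: (I :: r) := by
          rw [hlc', e3, e4, hins]
        have hvmem : v ∈ insert v X := Finset.mem_insert_self v X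
        obtain ⟨hl₂, _, _⟩ := pos_unique hPc' hdecc'
          (by rw [hlc₂]) hvmem (Finset.mem_insert_self v I₂)
        have hcpos : (label c).findIdx (fun C => decide (v ∈ C)) = l.length :=
          posv_spec hPc hlc (Finset.mem_insert_self v I)
        have hcpos' : (label c').findIdx (fun C => decide (v ∈ C)) = P.length :=
          posv_spec hPc' hdecc' hvmem
        rw [hcpos, hcpos', e1]
        simp
      | cons m₀ mid' =>
        simp only [List.cons_append] at e2
        injection e2 with e3 e4
        have hdecc' : label c' = (P ++ (X ∪ m₀) :: mid') ++ {v} :: (I :: r) := by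
          rw [hlc', e3, e4]
          simp
        exfalso
        obtain ⟨_, hBeq, _⟩ := pos_unique hPc' hdecc'
          (by rw [hlc₂]) (Finset.mem_singleton_self v) (Finset.mem_insert_self v I₂)
        obtain ⟨y, hy⟩ := hIne₂
        have : y ∈ ({v} : Finset ℕ) := hBeq ▸ (Finset.mem_insert_of_mem hy)
        exact hvI₂ ((Finset.mem_singleton.1 this) ▸ hy)
    · -- P = l ++ {v} :: mid, label c' has singleton {v} block : contradiction
      have hdecc' : label c' = l ++ {v} :: (mid ++ (X ∪ Y) :: R) := by
        rw [hlc', e1]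
        simp
      exfalso
      obtain ⟨_, hBeq, _⟩ := pos_unique hPc' hdecc'
        (by rw [hlc₂]) (Finset.mem_singleton_self v) (Finset.mem_insert_self v I₂)
      obtain ⟨y, hy⟩ := hIne₂
      have : y ∈ ({v} : Finset ℕ) := hBeq ▸ (Finset.mem_insert_of_mem hy)
      exact hvI₂ ((Finset.mem_singleton.1 this) ▸ hy)

/-! ### the in-cell step lemma for a critical cell -/

private lemma crit_cell_step {L : AbsSC} {F : Finset ℕ → Finset ℕ → Prop}
    {Ord : Finset ℕ → List ℕ} {γ : Finset ℕ} (hcrit : CriticalF F γ)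
    (ho : (Ord γ).Nodup) {c c' d : List (Finset ℕ)}
    (hc : IsBarySimplex L c) (hc' : IsBarySimplex L c')
    (hcar : carrier c = γ) (hcar' : carrier c' = γ)
    (hcd : DeltaPair L F Ord c d) (hfac : FacetChain c' d) (hne : c' ≠ c)
    (hlow : ∃ d', DeltaPair L F Ord c' d') :
    gcs (label c') ((Ord γ).map (fun a => ({a} : Finset ℕ))) <
      gcs (label c) ((Ord γ).map (fun a => ({a} : Finset ℕ))) ∨
    (gcs (label c') ((Ord γ).map (fun a => ({a} : Finset ℕ))) =
      gcs (label c) ((Ord γ).map (fun a => ({a} : Finset ℕ))) ∧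
     ∃ x : ℕ, (Ord γ).reverse[gcs (label c) ((Ord γ).map (fun a => ({a} : Finset ℕ)))]? = some x ∧
       (label c').findIdx (fun C => decide (x ∈ C)) <
         (label c).findIdx (fun C => decide (x ∈ C))) := by
  obtain ⟨hdcar, hcp⟩ := delta_crit (hcar ▸ hcrit) hcd
  rw [hcar] at hcp
  obtain ⟨x, l, I, r, hx, hxI, hIne, hlc, hld⟩ := hcp
  have hgdΛ : cpl (label d).reverse (sLam (Ord γ)) =
      gcs (label d) ((Ord γ).map (fun a => ({a} : Finset ℕ))) := (gcs_eq_cpl' _ _).symm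
  set g := gcs (label d) ((Ord γ).map (fun a => ({a} : Finset ℕ))) with hgdef
  have hgr : g ≤ r.length := crit_pos ho hgdΛ hx hld
  have hgc : cpl (label c).reverse (sLam (Ord γ)) = g := by
    rw [hlc]
    refine crit_gcs_transfer ho hxI hIne ?_ hx
    rw [← hld]
    exact hgdΛ
  have hgceq : gcs (label c) ((Ord γ).map (fun a => ({a} : Finset ℕ))) = g := by
    rw [gcs_eq_cpl']
    exact hgc
  obtain ⟨d', hcd'⟩ := hlow
  obtain ⟨hdcar', hcp'⟩ := delta_crit (hcar' ▸ hcrit) hcd'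
  rw [hcar'] at hcp'
  obtain ⟨x', l', I', r', hx', hxI', hIne', hlc', hld'⟩ := hcp'
  set g' := gcs (label d') ((Ord γ).map (fun a => ({a} : Finset ℕ))) with hg'def
  have hgc' : cpl (label c').reverse (sLam (Ord γ)) = g' := by
    rw [hlc']
    refine crit_gcs_transfer ho hxI' hIne' ?_ hx'
    rw [← hld']
    exact (gcs_eq_cpl' _ _).symm
  have hgc'eq : gcs (label c') ((Ord γ).map (fun a => ({a} : Finset ℕ))) = g' := by
    rw [gcs_eq_cpl']
    exact hgc'
  have hPc := bary_label_pairwise hc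
  have hPc' := bary_label_pairwise hc'
  have hNd := bary_label_nonempty hcd.2.1
  have hPd := bary_label_pairwise hcd.2.1
  rcases facet_cases hcd.2.1 hc' hfac with ⟨B, _, _, _, _, hlt⟩ | ⟨P, R, X, Y, hmerge, hlcp, _⟩
  · rw [hcar', hdcar, hcar] at hlt
    exact absurd hlt (ssubset_irrefl _)
  have hEq : P ++ X :: (Y :: R) = l ++ {x} :: (I :: r) := by rw [← hmerge, hld]
  have hΛg : (sLam (Ord γ))[g]? = some {x} := by rw [sLam_get?, hx]; rfl
  rcases append_cons_cases hEq with ⟨e1, e2, e3⟩ | ⟨mid, e1, e2⟩ | ⟨mid, e1, e2⟩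
  · -- merged exactly the pair's two blocks : c' = c
    injection e3 with e4 e5
    exact absurd (bary_label_inj hc' hc
      (by rw [hlcp, hlc, e1, e2, e4, e5, Finset.insert_eq])) hne
  · -- merge to the left of (or at) the {x} block
    have hld2 : cpl ((l ++ [{x}]) ++ I :: r).reverse (sLam (Ord γ)) = g := by
      have : label d = (l ++ [{x}]) ++ I :: r := by rw [hld]; simp
      rw [← this]
      exact hgdΛ
    have hW : ∃ W, label c' = W ++ I :: r := by
      cases mid with
      | nil =>
        simp only [List.nil_append] at e2
        injection e2 with e3 e4
        exact ⟨P ++ [X ∪ {x}], by rw [hlcp, e3, e4]; simp⟩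
      | cons m₀ mid' =>
        simp only [List.cons_append] at e2
        injection e2 with e3 e4
        exact ⟨P ++ (X ∪ m₀) :: mid' ++ [{x}], by rw [hlcp, e3, e4]; simp⟩
    obtain ⟨W, hWc⟩ := hW
    have htail : cpl (label c').reverse (sLam (Ord γ)) = g := by
      rw [hWc]
      exact cpl_tail_eq hgr hld2
    have hg'g : g' = g := by rw [← hgc', htail]
    have hx'x : x' = x := by
      have h1 : (Ord γ).reverse[g]? = some x' := by rw [← hg'g]; exact hx'
      exact Option.some.inj (h1.symm.trans hx)
    cases mid with
    | nil =>
      simp only [List.nil_append] at e2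
      injection e2 with e3 e4
      have hdecc' : label c' = P ++ (insert x X) :: (I :: r) := by
        rw [hlcp, e3, e4, Finset.union_comm, ← Finset.insert_eq]
      have hxX : x ∈ insert x X := Finset.mem_insert_self x X
      obtain ⟨hl', _, _⟩ := pos_unique hPc' hdecc'
        (by rw [hlc', hx'x]) hxX (Finset.mem_insert_self x I')
      right
      refine ⟨by rw [hgc'eq, hgceq, hg'g], x, by rw [hgceq]; exact hx, ?_⟩
      have p1 : (label c).findIdx (fun C => decide (x ∈ C)) = l.length :=
        posv_spec hPc hlc (Finset.mem_insert_self x I)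
      have p2 : (label c').findIdx (fun C => decide (x ∈ C)) = P.length :=
        posv_spec hPc' hdecc' hxX
      rw [p1, p2, e1]
      simp
    | cons m₀ mid' =>
      simp only [List.cons_append] at e2
      injection e2 with e3 e4
      have hdecc' : label c' = (P ++ (X ∪ m₀) :: mid') ++ {x} :: (I :: r) := by
        rw [hlcp, e3, e4]
        simp
      exfalso
      obtain ⟨_, hBeq, _⟩ := pos_unique hPc' hdecc'
        (by rw [hlc', hx'x]) (Finset.mem_singleton_self x) (Finset.mem_insert_self x I')
      obtain ⟨y, hy⟩ := hIne'
      have hyx : y ∈ ({x} : Finset ℕ) := hBeq ▸ (Finset.mem_insert_of_mem hy)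
      have hxmem : x ∈ I' := (Finset.mem_singleton.1 hyx) ▸ hy
      rw [hx'x] at hxI'
      exact hxI' hxmem
  · -- merge strictly to the right of the {x} block : P = l ++ {x} :: mid
    have hXmem : X ∈ label d := by rw [hmerge]; simp
    have hYmem : Y ∈ label d := by rw [hmerge]; simp
    have hXne := hNd X hXmem
    have hYne := hNd Y hYmem
    have hgetX : (label d)[P.length]? = some X := by
      rw [hmerge]; exact get?_block _ _ _
    have hgetY : (label d)[P.length + 1]? = some Y := by
      have hm2 : label d = (P ++ [X]) ++ Y :: R := by rw [hmerge]; simp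
      rw [hm2]
      have := get?_block (P ++ [X]) Y R
      simpa using this
    have hdisjXY : Disjoint X Y :=
      pairwise_get?_disj hPd (Nat.lt_succ_self _) hgetX hgetY
    have hrevd : (label d).reverse = R.reverse ++ Y :: (X :: P.reverse) := by
      rw [hmerge]; simp
    have hrevc' : (label c').reverse = R.reverse ++ (X ∪ Y) :: (l ++ {x} :: mid).reverse := by
      rw [hlcp, e1]; simp
    rcases Nat.lt_or_ge R.length g with hRg | hgR
    · -- the merge is inside the matched suffix : gcs strictly drops
      left
      have hYΛ : (sLam (Ord γ))[R.length]? = some Y := by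
        obtain ⟨a, ha1, ha2⟩ := cpl_agree hgdΛ R.length hRg
        rw [hrevd, rev_get?_eq] at ha1
        injection ha1 with h
        rw [← h] at ha2
        exact ha2
      have hnew : cpl (label c').reverse (sLam (Ord γ)) = R.length := by
        rw [cpl_iff]
        constructor
        · intro k hk
          obtain ⟨a, ha1, ha2⟩ := cpl_agree hgdΛ k (by omega)
          refine ⟨a, ?_, ha2⟩
          rw [hrevd, rev_get?_lt hk] at ha1
          rw [hrevc', rev_get?_lt hk]
          exact ha1
        · rintro ⟨a, ha1, ha2⟩
          rw [hrevc', rev_get?_eq] at ha1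
          rw [hYΛ] at ha2
          have haXY : a = X ∪ Y := by injection ha1 with h; exact h.symm
          have haY : a = Y := by injection ha2 with h; exact h.symm
          obtain ⟨ξ, hξ⟩ := hXne
          have : ξ ∈ Y := by
            rw [← haY, haXY]
            exact Finset.mem_union_left _ hξ
          exact (Finset.disjoint_left.1 hdisjXY hξ) this
      rw [hgc'eq, hgceq, ← hgc', hnew]
      exact hRg
    · -- the merge is outside the matched suffix : {x} survives as a singleton block
      have htail : cpl (label c').reverse (sLam (Ord γ)) = g := by
        rw [cpl_iff]
        constructor
        · intro k hk
          obtain ⟨a, ha1, ha2⟩ := cpl_agree hgdΛ k hk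
          refine ⟨a, ?_, ha2⟩
          have hkR : k < R.length := by omega
          rw [hrevd, rev_get?_lt hkR] at ha1
          rw [hrevc', rev_get?_lt hkR]
          exact ha1
        · rcases Nat.lt_or_ge g R.length with hlt | hge
          · rintro ⟨a, ha1, ha2⟩
            apply cpl_not_agree hgdΛ
            refine ⟨a, ?_, ha2⟩
            rw [hrevc', rev_get?_lt hlt] at ha1
            rw [hrevd, rev_get?_lt hlt]
            exact ha1
          · have hgR' : g = R.length := by omega
            rintro ⟨a, ha1, ha2⟩
            rw [hrevc', hgR', rev_get?_eq] at ha1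
            have haXY : a = X ∪ Y := by injection ha1 with h; exact h.symm
            rw [hΛg] at ha2
            have hax : a = {x} := by injection ha2 with h; exact h.symm
            exact union_ne_singleton hXne hYne hdisjXY x (by rw [← haXY, hax])
      have hg'g : g' = g := by rw [← hgc', htail]
      have hx'x : x' = x := by
        have h1 : (Ord γ).reverse[g]? = some x' := by rw [← hg'g]; exact hx'
        exact Option.some.inj (h1.symm.trans hx)
      have hdecc' : label c' = l ++ {x} :: (mid ++ (X ∪ Y) :: R) := by
        rw [hlcp, e1]
        simp
      exfalso
      obtain ⟨_, hBeq, _⟩ := pos_unique hPc' hdecc'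
        (by rw [hlc', hx'x]) (Finset.mem_singleton_self x) (Finset.mem_insert_self x I')
      obtain ⟨y, hy⟩ := hIne'
      have hyx : y ∈ ({x} : Finset ℕ) := hBeq ▸ (Finset.mem_insert_of_mem hy)
      have hxmem : x ∈ I' := (Finset.mem_singleton.1 hyx) ▸ hy
      rw [hx'x] at hxI'
      exact hxI' hxmem

/-! ### the main bundle lemma -/

private lemma cyclic_mono_const {n : ℕ} (a : ℕ → ℕ)
    (hmono : ∀ i < n, a (i+1) ≤ a i) (hcl : a n = a 0) : ∀ i ≤ n, a i = a 0 := by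
  have hdec : ∀ j ≤ n, a j ≤ a 0 := by
    intro j hj
    induction j with
    | zero => exact le_rfl
    | succ j ih => exact le_trans (hmono j (by omega)) (ih (by omega))
  intro i hi
  refine le_antisymm (hdec i hi) ?_
  rw [← hcl]
  have : ∀ j ≤ n - i, a (i + j) ≤ a i := by
    intro j hj
    induction j with
    | zero => exact le_rfl
    | succ j ih =>
      show a (i + j + 1) ≤ a i
      have := hmono (i + j) (by omega)
      have := ih (by omega)
      omega
  have := this (n - i) le_rfl
  rw [show i + (n - i) = n by omega] at this
  exact this

private lemma drop_v {L : AbsSC} {F : Finset ℕ → Finset ℕ → Prop}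
    {Ord : Finset ℕ → List ℕ} (hF : IsDVF L F) {s : Finset ℕ} {v : ℕ}
    {c cnext dd : List (Finset ℕ)}
    (hsv : F s (insert v s)) (hv : v ∉ s) (hcar : carrier c = insert v s)
    (hcd : DeltaPair L F Ord c dd) (hfac : FacetChain cnext dd)
    (hcnext : IsBarySimplex L cnext)
    (hdrop : carrier cnext ≠ carrier c) :
    v ∈ carrier cnext ∧ carrier cnext ⊆ insert v s := by
  obtain ⟨hdcar, l, I, r, hvI, hIne, hlc, hld⟩ := delta_rule3 hF hsv hv hcar hcd
  have hPd := bary_label_pairwise hcd.2.1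
  rcases facet_cases hcd.2.1 hcnext hfac with
    ⟨B, hBne, hlabB, hcB, hBsub, _⟩ | ⟨_, _, _, _, _, _, heq⟩
  · have hvB : v ∉ B := by
      intro hvB
      obtain ⟨e1, e2, e3⟩ := pos_unique hPd
        (show label dd = label cnext ++ B :: [] from by rw [hlabB])
        hld hvB (Finset.mem_singleton_self v)
      exact List.cons_ne_nil I r e3.symm
    constructor
    · rw [hcB, hdcar, hcar]
      exact Finset.mem_sdiff.2 ⟨Finset.mem_insert_self v s, hvB⟩
    · rw [hcB, hdcar, hcar]
      exact Finset.sdiff_subset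
  · exact absurd (heq.trans hdcar) hdrop

private lemma u_case {L : AbsSC} {F : Finset ℕ → Finset ℕ → Prop}
    {Ord : Finset ℕ → List ℕ} (hF : IsDVF L F)
    (hMorse : ¬ ∃ Q : VPath FacetFS F, 0 < Q.len ∧ Q.lower Q.len = Q.lower 0)
    {n : ℕ} (hn : 0 < n) (c d : ℕ → List (Finset ℕ))
    (hpair : ∀ i < n, DeltaPair L F Ord (c i) (d (i+1)))
    (hfac : ∀ i < n, FacetChain (c (i+1)) (d (i+1)))
    (hne : ∀ i < n, c (i+1) ≠ c i)
    (hclosed : c n = c 0)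
    (hRu0 : Rul F (c 0) (d 1)) : False := by
  classical
  have hbary : ∀ i ≤ n, IsBarySimplex L (c i) := by
    intro i hi
    rcases Nat.lt_or_ge i n with h | h
    · exact (hpair i h).1
    · have hin : i = n := by omega
      rw [hin, hclosed]
      exact (hpair 0 hn).1
  have h4F : ∀ s t u, F s t → ¬ F t u := hF.2.2.2
  have hRustep : ∀ i < n, Rul F (c i) (d (i+1)) → carrier (c (i+1)) = carrier (d (i+1)) := by
    intro i hi hr
    obtain ⟨s, v, hsv, hv, hcs, hcdv, hlab⟩ := hr
    have hd : d (i+1) = c i ++ [carrier (c i) ∪ {v}] :=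
      label_snoc (hbary i (by omega)) (hpair i hi).2.1 hlab
    have h1 := snoc_facet (hd ▸ hfac i hi) (hne i hi)
    rw [h1, hcdv, hcs, Finset.insert_eq, Finset.union_comm]
  have hRucard : ∀ i < n, Rul F (c i) (d (i+1)) →
      (carrier (c (i+1))).card = (carrier (c i)).card + 1 := by
    intro i hi hr
    obtain ⟨s, v, hsv, hv, hcs, hcdv, hlab⟩ := hr
    rw [hRustep i hi ⟨s, v, hsv, hv, hcs, hcdv, hlab⟩, hcdv, hcs,
      Finset.card_insert_of_notMem hv]
  have hNRusub : ∀ i < n, ¬ Rul F (c i) (d (i+1)) → carrier (c (i+1)) ⊆ carrier (c i) := by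
    intro i hi hnr
    have hdc := delta_not_ru (hpair i hi) hnr
    rcases facet_cases (hpair i hi).2.1 (hbary (i+1) (by omega)) (hfac i hi) with
      ⟨B, _, _, _, _, hlt⟩ | ⟨_, _, _, _, _, _, heq⟩
    · rw [← hdc]; exact le_of_lt hlt
    · rw [← hdc, heq]
  -- next rule-1 index (or the end of the cycle)
  have hNex : ∀ i : ℕ, ∃ j, i < j ∧ (n ≤ j ∨ Rul F (c j) (d (j+1))) :=
    fun i => ⟨max (i+1) n, by omega, Or.inl (by omega)⟩
  let N : ℕ → ℕ := fun i => Nat.find (hNex i)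
  have hNgt : ∀ i, i < N i := fun i => (Nat.find_spec (hNex i)).1
  have hNalt : ∀ i, n ≤ N i ∨ Rul F (c (N i)) (d (N i + 1)) :=
    fun i => (Nat.find_spec (hNex i)).2
  have hNmin : ∀ i j, i < j → (n ≤ j ∨ Rul F (c j) (d (j+1))) → N i ≤ j :=
    fun i j h1 h2 => Nat.find_min' (hNex i) ⟨h1, h2⟩
  have hNle : ∀ i < n, N i ≤ n := fun i hi => hNmin i n hi (Or.inl le_rfl)
  have hNnot : ∀ i j, i < j → j < N i → j < n ∧ ¬ Rul F (c j) (d (j+1)) := by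
    intro i j h1 h2
    have h3 := Nat.find_min (hNex i) h2
    push_neg at h3
    have h4 := h3 h1
    exact ⟨by omega, h4.2⟩
  -- constancy helper
  have hconst : ∀ (j₁ j₂ : ℕ), j₁ ≤ j₂ →
      (∀ j, j₁ ≤ j → j < j₂ → carrier (c (j+1)) = carrier (c j)) →
      carrier (c j₂) = carrier (c j₁) := by
    intro j₁ j₂ hle hstep
    induction j₂ with
    | zero =>
      have h0 : j₁ = 0 := by omega
      rw [h0]
    | succ j₂ ih =>
      rcases Nat.lt_or_ge j₁ (j₂+1) with h | h
      · rw [hstep j₂ (by omega) (by omega)]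
        exact ih (by omega) (fun j hg1 hg2 => hstep j hg1 (by omega))
      · have h2 : j₁ = j₂ + 1 := by omega
        rw [h2]
  -- every gap contains a drop
  have hgapdrop : ∀ i < n, Rul F (c i) (d (i+1)) →
      ∃ m, i < m ∧ m < N i ∧ ¬ Rul F (c m) (d (m+1)) ∧
        carrier (c (m+1)) ≠ carrier (c m) := by
    intro i hi hr
    by_contra hcon
    push_neg at hcon
    obtain ⟨s, v, hsv, hv, hcs, hcdv, hlab⟩ := hr
    have hr' : Rul F (c i) (d (i+1)) := ⟨s, v, hsv, hv, hcs, hcdv, hlab⟩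
    have hstep1 : carrier (c (i+1)) = insert v s := by
      rw [hRustep i hi hr', hcdv]
    have hsteps : ∀ j, i+1 ≤ j → j < N i → carrier (c (j+1)) = carrier (c j) := by
      intro j hg1 hg2
      have hnr := (hNnot i j (by omega) hg2).2
      exact hcon j (by omega) hg2 hnr
    have hconst2 : carrier (c (N i)) = insert v s := by
      have hNi1 := hNgt i
      rw [hconst (i+1) (N i) (by omega) hsteps, hstep1]
    rcases hNalt i with hNn | hRuN
    · have hNn' : N i = n := by have := hNle i hi; omega
      obtain ⟨s₀, v₀, hsv₀, _, hcs₀, _, _⟩ := hRu0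
      have hseq : s₀ = insert v s := by
        rw [← hcs₀, ← hclosed, ← hNn']
        exact hconst2
      exact h4F s (insert v s) _ hsv (hseq ▸ hsv₀)
    · obtain ⟨s', v', hsv', _, hcs', _, _⟩ := hRuN
      have hseq : s' = insert v s := by rw [← hcs']; exact hconst2
      exact h4F s (insert v s) _ hsv (hseq ▸ hsv')
  -- counting
  have hsub_ne : ∀ i < n, ¬ Rul F (c i) (d (i+1)) →
      carrier (c (i+1)) ≠ carrier (c i) →
      (carrier (c (i+1))).card < (carrier (c i)).card := by
    intro i hi h1 h2
    exact Finset.card_lt_card (lt_of_le_of_ne (hNRusub i hi h1) h2)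
  set δ : ℕ → ℤ := fun i => (if Rul F (c i) (d (i+1)) then (1:ℤ) else 0) -
    (((carrier (c (i+1))).card : ℤ) - ((carrier (c i)).card : ℤ)) with hδdef
  have htel : ∑ i ∈ Finset.range n,
      (((carrier (c (i+1))).card : ℤ) - ((carrier (c i)).card : ℤ)) = 0 := by
    rw [Finset.sum_range_sub (fun i => ((carrier (c i)).card : ℤ))]
    rw [hclosed]
    ring
  set U : Finset ℕ := (Finset.range n).filter (fun i => Rul F (c i) (d (i+1))) with hUdef
  set D : Finset ℕ := (Finset.range n).filter
    (fun i => ¬ Rul F (c i) (d (i+1)) ∧ carrier (c (i+1)) ≠ carrier (c i)) with hDdef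
  have hsumδ : ∑ i ∈ Finset.range n, δ i = (U.card : ℤ) := by
    rw [hδdef, Finset.sum_sub_distrib, htel, sub_zero, hUdef, Finset.sum_boole]
  have hδzero : ∀ i ∈ Finset.range n, i ∉ D → δ i = 0 := by
    intro i hir hiD
    have hi : i < n := Finset.mem_range.1 hir
    by_cases hr : Rul F (c i) (d (i+1))
    · have hcard := hRucard i hi hr
      simp only [hδdef, if_pos hr]
      push_cast
      omega
    · have hceq : carrier (c (i+1)) = carrier (c i) := by
        by_contra hne'
        exact hiD (by rw [hDdef]; exact Finset.mem_filter.2 ⟨hir, hr, hne'⟩)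
      simp only [hδdef, if_neg hr, hceq]
      ring
  have hδpos : ∀ i ∈ D, 1 ≤ δ i := by
    intro i hiD
    rw [hDdef] at hiD
    obtain ⟨hir, hr, hne'⟩ := Finset.mem_filter.1 hiD
    have hlt := hsub_ne i (Finset.mem_range.1 hir) hr hne'
    simp only [hδdef, if_neg hr]
    push_cast
    omega
  have hsumD : ∑ i ∈ D, δ i = (U.card : ℤ) := by
    rw [Finset.sum_subset (by rw [hDdef]; exact Finset.filter_subset _ _) hδzero]
    exact hsumδ
  -- the first drop after an index
  have hφex : ∀ i : ℕ, ∃ m, i < m ∧ (n ≤ m ∨ (¬ Rul F (c m) (d (m+1)) ∧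
      carrier (c (m+1)) ≠ carrier (c m))) :=
    fun i => ⟨max (i+1) n, by omega, Or.inl (by omega)⟩
  let φ : ℕ → ℕ := fun i => Nat.find (hφex i)
  have hφspec : ∀ i < n, Rul F (c i) (d (i+1)) →
      i < φ i ∧ φ i < N i ∧ φ i ∈ D := by
    intro i hi hr
    obtain ⟨m₀, hm1, hm2, hm3, hm4⟩ := hgapdrop i hi hr
    have hmn : m₀ < n := by have := hNle i hi; omega
    have hle : φ i ≤ m₀ := Nat.find_min' (hφex i) ⟨hm1, Or.inr ⟨hm3, hm4⟩⟩
    have hspec : i < φ i ∧ (n ≤ φ i ∨ (¬ Rul F (c (φ i)) (d (φ i + 1)) ∧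
        carrier (c (φ i + 1)) ≠ carrier (c (φ i)))) := Nat.find_spec (hφex i)
    have hφn : φ i < n := by omega
    rcases hspec.2 with h | h
    · omega
    · exact ⟨hspec.1, by omega, by
        rw [hDdef]; exact Finset.mem_filter.2 ⟨Finset.mem_range.2 hφn, h⟩⟩
  have hφmin : ∀ i m, i < m → (¬ Rul F (c m) (d (m+1)) ∧
      carrier (c (m+1)) ≠ carrier (c m)) → φ i ≤ m :=
    fun i m h1 h2 => Nat.find_min' (hφex i) ⟨h1, Or.inr h2⟩
  have hUmem : ∀ i ∈ U, i < n ∧ Rul F (c i) (d (i+1)) := by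
    intro i hiU
    rw [hUdef] at hiU
    obtain ⟨h1, h2⟩ := Finset.mem_filter.1 hiU
    exact ⟨Finset.mem_range.1 h1, h2⟩
  have hφlt : ∀ i ∈ U, ∀ i' ∈ U, i < i' → φ i < φ i' := by
    intro i hiU i' hiU' hlt
    obtain ⟨hi, hr⟩ := hUmem i hiU
    obtain ⟨hi', hr'⟩ := hUmem i' hiU'
    have h1 := hφspec i hi hr
    have h2 := hφspec i' hi' hr'
    have hNi : N i ≤ i' := hNmin i i' hlt (Or.inr hr')
    omega
  have hinj : Set.InjOn φ (U : Set ℕ) := by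
    intro i hi i' hi' heq
    by_contra hne'
    rcases lt_or_gt_of_ne hne' with h | h
    · have := hφlt i (Finset.mem_coe.1 hi) i' (Finset.mem_coe.1 hi') h
      omega
    · have := hφlt i' (Finset.mem_coe.1 hi') i (Finset.mem_coe.1 hi) h
      omega
  have hUD : U.card ≤ D.card := by
    refine Finset.card_le_card_of_injOn φ ?_ hinj
    intro i hiU
    obtain ⟨hi, hr⟩ := hUmem i hiU
    exact (hφspec i hi hr).2.2
  have hDU : (D.card : ℤ) ≤ ∑ i ∈ D, δ i := by
    have h1 := Finset.card_nsmul_le_sum D δ 1 hδpos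
    simpa using h1
  have hDcard : D.card = U.card := by
    have h2 : (D.card : ℤ) ≤ (U.card : ℤ) := hsumD ▸ hDU
    have h3 : U.card ≤ D.card := hUD
    omega
  have hδone : ∀ i ∈ D, δ i = 1 := by
    have hzero : ∑ i ∈ D, (δ i - 1) = 0 := by
      rw [Finset.sum_sub_distrib, hsumD]
      simp [hDcard]
    have hnn : ∀ i ∈ D, 0 ≤ δ i - 1 := fun i hi => by have := hδpos i hi; omega
    have hall := (Finset.sum_eq_zero_iff_of_nonneg hnn).1 hzero
    intro i hi
    have := hall i hi
    omega
  have himg : Finset.image φ U = D := by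
    apply Finset.eq_of_subset_of_card_le
    · intro m hm
      obtain ⟨i, hiU, hφi⟩ := Finset.mem_image.1 hm
      obtain ⟨hi, hr⟩ := hUmem i hiU
      have := (hφspec i hi hr).2.2
      rwa [hφi] at this
    · rw [Finset.card_image_of_injOn hinj, hDcard]
  have huniq : ∀ i < n, Rul F (c i) (d (i+1)) → ∀ m, i < m → m < N i →
      (¬ Rul F (c m) (d (m+1)) ∧ carrier (c (m+1)) ≠ carrier (c m)) → m = φ i := by
    intro i hi hr m h1 h2 h3
    have hmn : m < n := by have := hNle i hi; omega
    have hmD : m ∈ D := by rw [hDdef]; exact Finset.mem_filter.2 ⟨Finset.mem_range.2 hmn, h3⟩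
    rw [← himg] at hmD
    obtain ⟨i₁, hi₁U, hφi₁⟩ := Finset.mem_image.1 hmD
    obtain ⟨hi₁, hr₁⟩ := hUmem i₁ hi₁U
    have hs₁ := hφspec i₁ hi₁ hr₁
    rcases lt_trichotomy i₁ i with hlt | heq | hgt
    · have hNi₁ : N i₁ ≤ i := hNmin i₁ i hlt (Or.inr hr)
      omega
    · rw [heq] at hφi₁
      exact hφi₁.symm
    · have hNi : N i ≤ i₁ := hNmin i i₁ hgt (Or.inr hr₁)
      omega
  -- the gap analysis
  have hGAP : ∀ i < n, Rul F (c i) (d (i+1)) →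
      carrier (c (N i)) ⊆ carrier (d (i+1)) ∧
      (carrier (d (i+1))).card = (carrier (c (N i))).card + 1 ∧
      ∃ v, v ∈ carrier (c (N i)) ∧ v ∉ carrier (c i) := by
    intro i hi hr
    obtain ⟨s, v, hsv, hv, hcs, hcdv, hlab⟩ := hr
    have hr' : Rul F (c i) (d (i+1)) := ⟨s, v, hsv, hv, hcs, hcdv, hlab⟩
    obtain ⟨hφ1, hφ2, hφ3⟩ := hφspec i hi hr'
    have hmn : φ i < n := by have := hNle i hi; omega
    have hmD := hφ3
    rw [hDdef] at hmD
    obtain ⟨hmrange, hmNR, hmne⟩ := Finset.mem_filter.1 hmD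
    have hconstA : carrier (c (φ i)) = insert v s := by
      have hstepA : ∀ j, i+1 ≤ j → j < φ i → carrier (c (j+1)) = carrier (c j) := by
        intro j h1 h2
        have hjn := (hNnot i j (by omega) (by omega)).2
        by_contra hne'
        have := huniq i hi hr' j (by omega) (by omega) ⟨hjn, hne'⟩
        omega
      have h0 : carrier (c (i+1)) = insert v s := by
        rw [hRustep i hi hr', hcdv]
      rw [hconst (i+1) (φ i) (by omega) hstepA, h0]
    have hdrop := drop_v hF hsv hv hconstA (hpair (φ i) hmn) (hfac (φ i) hmn)
      (hbary (φ i + 1) (by omega)) hmne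
    have hδm := hδone (φ i) hφ3
    have hcardm : (carrier (c (φ i + 1))).card + 1 = (carrier (c (φ i))).card := by
      simp only [hδdef, if_neg hmNR] at hδm
      push_cast at hδm
      omega
    have hconstB : carrier (c (N i)) = carrier (c (φ i + 1)) := by
      have hstepB : ∀ j, φ i + 1 ≤ j → j < N i → carrier (c (j+1)) = carrier (c j) := by
        intro j h1 h2
        have hjn := (hNnot i j (by omega) h2).2
        by_contra hne'
        have := huniq i hi hr' j (by omega) h2 ⟨hjn, hne'⟩
        omega
      exact hconst (φ i + 1) (N i) (by omega) hstepB
    refine ⟨?_, ?_, v, ?_, ?_⟩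
    · rw [hconstB, hcdv]
      exact hdrop.2
    · rw [hconstB, hcdv, ← hconstA]
      omega
    · rw [hconstB]
      exact hdrop.1
    · rw [hcs]
      exact hv
  -- iterating N from 0
  let e : ℕ → ℕ := fun j => N^[j] 0
  have he0 : e 0 = 0 := rfl
  have hes : ∀ j, e (j+1) = N (e j) := fun j => Function.iterate_succ_apply' N j 0
  have hele : ∀ j, e j < n → e (j+1) ≤ n := by
    intro j h
    rw [hes]
    exact hNle _ h
  have hexK : ∃ j, n ≤ e j := by
    have hj : ∀ j, j ≤ e j ∨ n ≤ e j := by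
      intro j
      induction j with
      | zero => exact Or.inl (by omega)
      | succ j ih =>
        rcases Nat.lt_or_ge (e j) n with h | h
        · left
          have h2 : e j < e (j+1) := by rw [hes]; exact hNgt _
          rcases ih with h3 | h3
          · omega
          · omega
        · right
          have h2 : e j < e (j+1) := by rw [hes]; exact hNgt _
          omega
    rcases hj n with h | h
    · exact ⟨n, h⟩
    · exact ⟨n, h⟩
  let K : ℕ := Nat.find hexK
  have hKge : n ≤ e K := Nat.find_spec hexK
  have hKmin : ∀ j < K, e j < n := by
    intro j hj
    have := Nat.find_min hexK hj
    omega
  have hKpos : 0 < K := by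
    by_contra h
    have hK0 : K = 0 := by omega
    have := hKge
    rw [hK0, he0] at this
    omega
  have hKeq : e K = n := by
    have h1 : e (K-1) < n := hKmin (K-1) (by omega)
    have h2 : e K ≤ n := by
      have := hele (K-1) h1
      rw [show K - 1 + 1 = K by omega] at this
      exact this
    omega
  have hRuE : ∀ j < K, Rul F (c (e j)) (d (e j + 1)) := by
    intro j hj
    induction j with
    | zero => rw [he0]; exact hRu0
    | succ j ih =>
      have hj' : j < K := by omega
      have hej : e j < n := hKmin j hj'
      rcases hNalt (e j) with h | h
      · have : n ≤ e (j+1) := by rw [hes]; exact h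
        have := hKmin (j+1) hj
        omega
      · rw [hes]
        exact h
  -- construct the closed V-path of F
  have hface : ∀ j, 1 ≤ j → j ≤ K → FacetFS (carrier (c (e j))) (carrier (d (e (j-1) + 1))) := by
    intro j h1 h2
    have hj' : j - 1 < K := by omega
    have hgap := hGAP (e (j-1)) (hKmin _ hj') (hRuE _ hj')
    have hej : e j = N (e (j-1)) := by
      rw [show j = (j-1)+1 by omega, hes]
    constructor
    · rw [hej]
      exact hgap.1
    · rw [hej]
      exact hgap.2.1
  have hlne : ∀ j < K, carrier (c (e j)) ≠ carrier (c (e (j+1))) := by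
    intro j hj
    obtain ⟨_, _, v, hv1, hv2⟩ := hGAP (e j) (hKmin _ hj) (hRuE _ hj)
    rw [hes]
    intro hcontra
    rw [← hcontra] at hv1
    exact hv2 hv1
  refine hMorse ⟨⟨K,
    (fun j => if j = 0 then carrier (d (e (K-1) + 1)) else carrier (d (e (j-1) + 1))),
    (fun j => carrier (c (e j))), ?_, ?_, ?_⟩, hKpos, ?_⟩
  · intro j hj
    by_cases h0 : j = 0
    · subst h0
      simp only [if_pos rfl]
      have hfK := hface K (by omega) le_rfl
      have hl : carrier (c (e 0)) = carrier (c (e K)) := by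
        rw [he0, hKeq, hclosed]
      rw [hl]
      exact hfK
    · simp only [if_neg h0]
      exact hface j (by omega) hj
  · intro j hj
    simp only [if_neg (by omega : ¬ j + 1 = 0)]
    obtain ⟨s, v, hsv, hv, hcs, hcdv, _⟩ := hRuE j hj
    show F (carrier (c (e j))) (carrier (d (e (j+1-1) + 1)))
    rw [show j+1-1 = j from rfl, hcs, hcdv]
    exact hsv
  · intro j hj
    exact hlne j hj
  · show carrier (c (e K)) = carrier (c (e 0))
    rw [hKeq, he0, hclosed]

private lemma no_closed_bundle {L : AbsSC} {F : Finset ℕ → Finset ℕ → Prop}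
    {Ord : Finset ℕ → List ℕ} (hF : IsDVF L F)
    (hMorse : ¬ ∃ Q : VPath FacetFS F, 0 < Q.len ∧ Q.lower Q.len = Q.lower 0)
    (hOrd : OrdValid L F Ord) {n : ℕ} (hn : 0 < n) (c d : ℕ → List (Finset ℕ))
    (hpair : ∀ i < n, DeltaPair L F Ord (c i) (d (i+1)))
    (hfac : ∀ i < n, FacetChain (c (i+1)) (d (i+1)))
    (hne : ∀ i < n, c (i+1) ≠ c i)
    (hclosed : c n = c 0) : False := by
  have hbary : ∀ i ≤ n, IsBarySimplex L (c i) := by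
    intro i hi
    rcases Nat.lt_or_ge i n with h | h
    · exact (hpair i h).1
    · have hin : i = n := by omega
      rw [hin, hclosed]
      exact (hpair 0 hn).1
  have hlow : ∀ i ≤ n, ∃ d', DeltaPair L F Ord (c i) d' := by
    intro i hi
    rcases Nat.lt_or_ge i n with h | h
    · exact ⟨d (i+1), hpair i h⟩
    · have hin : i = n := by omega
      rw [hin, hclosed]
      exact ⟨d 1, hpair 0 hn⟩
  by_cases hU : ∃ i, i < n ∧ Rul F (c i) (d (i+1))
  · -- rotate so that the rule-1 step is at index 0
    obtain ⟨i₀, hi₀, hRu⟩ := hU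
    rcases Nat.lt_or_ge 1 n with hn2 | hn1
    swap
    · have hn1' : n = 1 := by omega
      subst hn1'
      exact hne 0 (by omega) hclosed
    have hkey : ∀ i : ℕ, c ((i₀ + (i+1)) % n) = c ((i₀ + i) % n + 1) := by
      intro i
      have e1 : (i₀ + (i+1)) % n = ((i₀ + i) % n + 1) % n := by
        conv_lhs => rw [show i₀ + (i+1) = (i₀ + i) + 1 by omega]
        rw [Nat.add_mod (i₀+i) 1 n, Nat.mod_eq_of_lt hn2]
      rcases Nat.lt_or_ge ((i₀ + i) % n + 1) n with hlt | hge
      · rw [e1, Nat.mod_eq_of_lt hlt]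
      · have hje : (i₀ + i) % n + 1 = n := by
          have := Nat.mod_lt (i₀ + i) hn
          omega
        rw [e1, hje, Nat.mod_self]
        exact hclosed.symm
    refine u_case (Ord := Ord) hF hMorse hn (fun i => c ((i₀ + i) % n))
      (fun i => d ((i₀ + (i-1)) % n + 1)) ?_ ?_ ?_ ?_ ?_
    · intro i hi
      show DeltaPair L F Ord (c ((i₀ + i) % n)) (d ((i₀ + (i+1-1)) % n + 1))
      exact hpair _ (Nat.mod_lt _ hn)
    · intro i hi
      show FacetChain (c ((i₀ + (i+1)) % n)) (d ((i₀ + (i+1-1)) % n + 1))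
      rw [hkey i]
      exact hfac _ (Nat.mod_lt _ hn)
    · intro i hi
      show c ((i₀ + (i+1)) % n) ≠ c ((i₀ + i) % n)
      rw [hkey i]
      exact hne _ (Nat.mod_lt _ hn)
    · show c ((i₀ + n) % n) = c ((i₀ + 0) % n)
      rw [Nat.add_mod_right, Nat.add_zero, Nat.mod_eq_of_lt hi₀]
    · show Rul F (c ((i₀ + 0) % n)) (d ((i₀ + (1-1)) % n + 1))
      rw [Nat.add_zero, Nat.mod_eq_of_lt hi₀]
      exact hRu
  · push_neg at hU
    have hcar : ∀ i < n, carrier (d (i+1)) = carrier (c i) := fun i hi =>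
      delta_not_ru (hpair i hi) (hU i hi)
    have hstep : ∀ i < n, carrier (c (i+1)) = carrier (c i) ∨
        carrier (c (i+1)) ⊂ carrier (c i) := by
      intro i hi
      rcases facet_cases (hpair i hi).2.1 (hbary (i+1) (by omega)) (hfac i hi) with
        ⟨B, _, _, _, _, hlt⟩ | ⟨_, _, _, _, _, _, heq⟩
      · right; rw [← hcar i hi]; exact hlt
      · left; rw [← hcar i hi]; exact heq
    have hcardmono : ∀ i < n, (carrier (c (i+1))).card ≤ (carrier (c i)).card := by
      intro i hi
      rcases hstep i hi with h | h
      · rw [h]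
      · exact le_of_lt (Finset.card_lt_card h)
    have hcardeq := cyclic_mono_const (fun i => (carrier (c i)).card) hcardmono
      (by rw [hclosed])
    have hceq : ∀ i < n, carrier (c (i+1)) = carrier (c i) := by
      intro i hi
      rcases hstep i hi with h | h
      · exact h
      · exfalso
        have h1 := Finset.card_lt_card h
        have e1 := hcardeq i (by omega)
        have e2 := hcardeq (i+1) (by omega)
        omega
    have hgam : ∀ i ≤ n, carrier (c i) = carrier (c 0) := by
      intro i hi
      induction i with
      | zero => rfl
      | succ i ih => rw [hceq i (by omega)]; exact ih (by omega)
    have hγ : carrier (c 0) ∈ L.faces := bary_carrier_mem_faces (hbary 0 (by omega))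
    by_cases hlo : ∃ t, F (carrier (c 0)) t
    · obtain ⟨t, ht⟩ := hlo
      exact hU 0 hn (delta_lower_cell hF ht (hpair 0 hn))
    by_cases hup : ∃ s, F s (carrier (c 0))
    · obtain ⟨s, hs⟩ := hup
      obtain ⟨hsf, hγf, hsub, hcard⟩ := hF.1 s (carrier (c 0)) hs
      have hone : (carrier (c 0) \ s).card = 1 := by rw [Finset.card_sdiff_of_subset hsub]; omega
      obtain ⟨v, hv⟩ := Finset.card_eq_one.1 hone
      have hvs : v ∉ s := by
        have hmem : v ∈ carrier (c 0) \ s := by rw [hv]; exact Finset.mem_singleton_self v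
        exact (Finset.mem_sdiff.1 hmem).2
      have hγeq : carrier (c 0) = insert v s := by
        have h1 : carrier (c 0) = s ∪ (carrier (c 0) \ s) :=
          (Finset.union_sdiff_of_subset hsub).symm
        rw [h1, hv, Finset.union_comm, ← Finset.insert_eq]
      have hsv : F s (insert v s) := by rw [← hγeq]; exact hs
      refine cyclic_lex_false hn (fun _ => 0)
        (fun i => (label (c i)).findIdx (fun C => decide (v ∈ C)))
        (fun i hi => Or.inr ⟨rfl, ?_⟩) rfl (by rw [hclosed])
      exact pair_cell_step hF hsv hvs (hbary i (by omega)) (hbary (i+1) (by omega))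
        (by rw [← hγeq]; exact hgam i (by omega))
        (by rw [← hγeq]; exact hgam (i+1) (by omega))
        (hpair i hi) (hfac i hi) (hne i hi) (hlow (i+1) (by omega))
    · have hcritγ : CriticalF F (carrier (c 0)) :=
        ⟨fun t ht => hlo ⟨t, ht⟩, fun t ht => hup ⟨t, ht⟩⟩
      obtain ⟨hnod, _⟩ := hOrd (carrier (c 0)) hγ hcritγ
      refine cyclic_lex_false hn
        (fun i => gcs (label (c i))
          ((Ord (carrier (c 0))).map (fun a => ({a} : Finset ℕ))))
        (fun i => (label (c i)).findIdx (fun C => decide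
          ((((Ord (carrier (c 0))).reverse[gcs (label (c i)) ((Ord (carrier (c 0))).map (fun a => ({a} : Finset ℕ)))]?).getD 0)
              ∈ C)))
        ?_ (by rw [hclosed]) (by rw [hclosed])
      intro i hi
      have hstep2 := crit_cell_step hcritγ hnod (hbary i (by omega)) (hbary (i+1) (by omega))
        (hgam i (by omega)) (hgam (i+1) (by omega)) (hpair i hi) (hfac i hi) (hne i hi)
        (hlow (i+1) (by omega))
      rcases hstep2 with h | ⟨hgeq, x, hx, hlt⟩
      · exact Or.inl h
      · right
        refine ⟨hgeq, ?_⟩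
        rw [hgeq, hx]
        simpa using hlt

end DeltaMorseAux

/-- If `F` is a discrete Morse function on `L`, then the vector field `Δ(F)` on the
barycentric subdivision has no closed V-paths, i.e. `Δ(F)` is a discrete Morse
function. -/
theorem deltaF_is_morse (L : AbsSC) (F : Finset ℕ → Finset ℕ → Prop)
    (Ord : Finset ℕ → List ℕ) (hF : IsDVF L F)
    (hMorse : ¬ ∃ Q : VPath FacetFS F, 0 < Q.len ∧ Q.lower Q.len = Q.lower 0)
    (hOrd : OrdValid L F Ord) :
    ¬ ∃ P : VPath FacetChain (DeltaPair L F Ord),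
      0 < P.len ∧ P.lower P.len = P.lower 0 := by
  rintro ⟨P, hlen, hclosed⟩
  exact no_closed_bundle hF hMorse hOrd hlen P.lower P.upper
    (fun i hi => P.pair_step i hi)
    (fun i hi => P.face_step (i+1) (by omega))
    (fun i hi => (P.lower_ne i hi).symm)
    hclosed
end
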